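/- arXiv:2604.23365 — 5 statements merged into one kernel-verified Lean document; each statement's English description precedes it below -/
import Mathlib

section
/- Let r ≥ 3, n ≥ r, and let K_n^{(r)} be the complete r-uniform hypergraph on {1,…,n} (whose hyperedges are all r-element subsets). (a) If (0, y) is an eigenpair of A(K_n^{(r)}), then y is a non-main eigenvector, i.e. ∑_{S ⊆ {1,…,n}, |S| = r−1} ∏_{i∈S} y_i = 0; consequently 0 is a non-main eigenvalue of A(K_n^{(r)}). (b) If (λ, y) is an eigenpair of A(K_n^{(r)}) with λ ≠ 0, then y is a non-main eigenvector if and only if ∑_{i=1}^n y_i^{r−1} = 0. -/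
open Finset
open scoped Classical

/-- The adjacency hypermatrix entry of an `r`-uniform hypergraph with hyperedge set `E`:
the `(j, f 0, …, f (r-2))`-entry is `1/(r-1)!` when the indices are pairwise distinct and
form a hyperedge, and `0` otherwise. -/
noncomputable def adjEntry (r : ℕ) {V : Type*} [Fintype V] [DecidableEq V]
    (E : Finset (Finset V)) (j : V) (f : Fin (r - 1) → V) : ℂ :=
  if Function.Injective f ∧ (∀ i, f i ≠ j) ∧ insert j (Finset.image f Finset.univ) ∈ E then
    1 / ((r - 1).factorial : ℂ)
  else 0

/-- The degree of a vertex: the number of hyperedges containing it. -/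
def hdegree {V : Type*} [DecidableEq V] (E : Finset (Finset V)) (v : V) : ℕ :=
  (E.filter fun e => v ∈ e).card

/-- The Laplacian hypermatrix entry `L = D - A`. -/
noncomputable def lapEntry (r : ℕ) {V : Type*} [Fintype V] [DecidableEq V]
    (E : Finset (Finset V)) (j : V) (f : Fin (r - 1) → V) : ℂ :=
  (if ∀ i, f i = j then (hdegree E j : ℂ) else 0) - adjEntry r E j f

/-- The signless Laplacian hypermatrix entry `Q = D + A`. -/
noncomputable def signlessEntry (r : ℕ) {V : Type*} [Fintype V] [DecidableEq V]
    (E : Finset (Finset V)) (j : V) (f : Fin (r - 1) → V) : ℂ :=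
  (if ∀ i, f i = j then (hdegree E j : ℂ) else 0) + adjEntry r E j f

/-- `(lam, x)` is an eigenpair of the order-`r` hypermatrix `T` (represented by its
first index and the remaining `r-1` indices). -/
def IsEigenpair {V : Type*} [Fintype V] (r : ℕ)
    (T : V → (Fin (r - 1) → V) → ℂ) (lam : ℂ) (x : V → ℂ) : Prop :=
  x ≠ 0 ∧ ∀ j, ∑ f : Fin (r - 1) → V, T j f * ∏ i, x (f i) = lam * x j ^ (r - 1)

/-- A vector is non-main if the sum over all `(r-1)`-subsets `S` of the vertex set of
`∏_{i ∈ S} x i` vanishes. -/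
def IsNonMainVec {V : Type*} [Fintype V] [DecidableEq V] (r : ℕ) (x : V → ℂ) : Prop :=
  ∑ S ∈ Finset.univ.powersetCard (r - 1), ∏ i ∈ S, x i = 0

/-- An eigenvalue is non-main if it has some non-main eigenvector. -/
def IsNonMainEigenvalue {V : Type*} [Fintype V] [DecidableEq V] (r : ℕ)
    (T : V → (Fin (r - 1) → V) → ℂ) (lam : ℂ) : Prop :=
  ∃ x, IsEigenpair r T lam x ∧ IsNonMainVec r x

/-- The complete `r`-uniform hypergraph on `n` vertices: all `r`-element subsets. -/
def completeEdges (r n : ℕ) : Finset (Finset (Fin n)) :=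
  Finset.univ.powersetCard r

lemma adjEntry_complete (r n : ℕ) (hr : 1 ≤ r) (j : Fin n) (f : Fin (r-1) → Fin n) :
    adjEntry r (completeEdges r n) j f =
      if Function.Injective f ∧ ∀ i, f i ≠ j then 1 / ((r-1).factorial : ℂ) else 0 := by
  unfold adjEntry completeEdges
  congr 1
  apply propext
  constructor
  · rintro ⟨h1, h2, _⟩; exact ⟨h1, h2⟩
  · rintro ⟨h1, h2⟩
    refine ⟨h1, h2, ?_⟩
    rw [Finset.mem_powersetCard]
    refine ⟨Finset.subset_univ _, ?_⟩
    rw [Finset.card_insert_of_notMem, Finset.card_image_of_injective _ h1,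
      Finset.card_univ, Fintype.card_fin, Nat.sub_add_cancel hr]
    intro hmem
    rw [Finset.mem_image] at hmem
    obtain ⟨i, -, hi⟩ := hmem
    exact h2 i hi

lemma card_fiber (k n : ℕ) (S : Finset (Fin n)) (hS : S.card = k) :
    (Finset.univ.filter (fun f : Fin k → Fin n =>
        Function.Injective f ∧ Finset.image f Finset.univ = S)).card = k.factorial := by
  rw [← Fintype.card_subtype]
  have e : {f : Fin k → Fin n // Function.Injective f ∧ Finset.image f Finset.univ = S} ≃
      (Fin k ↪ {v : Fin n // v ∈ S}) := by
    refine
      { toFun := fun p => ⟨fun i => ⟨p.1 i, by have := Finset.mem_image_of_mem p.1 (Finset.mem_univ i); rwa [p.2.2] at this⟩,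
          fun a b h => p.2.1 (congrArg Subtype.val h)⟩
        invFun := fun g => ⟨fun i => (g i : Fin n), ?_, ?_⟩
        left_inv := fun p => rfl
        right_inv := fun g => by ext i : 2; rfl }
    · intro a b h
      exact g.injective (Subtype.ext h)
    · apply Finset.eq_of_subset_of_card_le
      · intro v hv
        simp only [Finset.mem_image] at hv
        obtain ⟨i, -, hi⟩ := hv
        exact hi ▸ (g i).2
      · rw [Finset.card_image_of_injective _ (fun a b h => g.injective (Subtype.ext h)),
          Finset.card_univ, Fintype.card_fin, hS]
  rw [Fintype.card_congr e, Fintype.card_embedding_eq, Fintype.card_fin, Fintype.card_coe, hS,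
    Nat.descFactorial_self]

lemma sum_inj (k n : ℕ) (x : Fin n → ℂ) :
    ∑ f ∈ Finset.univ.filter (fun f : Fin k → Fin n => Function.Injective f), ∏ i, x (f i)
    = (k.factorial : ℂ) * ∑ S ∈ Finset.univ.powersetCard k, ∏ i ∈ S, x i := by
  rw [← Finset.sum_fiberwise_of_maps_to (g := fun f : Fin k → Fin n => Finset.image f Finset.univ)
      (t := Finset.univ.powersetCard k) ?_ (fun f => ∏ i, x (f i))]
  · rw [Finset.mul_sum]
    refine Finset.sum_congr rfl fun S hS => ?_
    rw [Finset.mem_powersetCard] at hS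
    rw [Finset.filter_filter]
    have h1 : ∀ f ∈ Finset.univ.filter (fun f : Fin k → Fin n =>
        Function.Injective f ∧ Finset.image f Finset.univ = S),
        ∏ i, x (f i) = ∏ v ∈ S, x v := by
      intro f hf
      simp only [Finset.mem_filter] at hf
      rw [← hf.2.2, Finset.prod_image (fun a _ b _ h => hf.2.1 h)]
    rw [Finset.sum_congr rfl h1, Finset.sum_const, card_fiber k n S hS.2, nsmul_eq_mul]
  · intro f hf
    simp only [Finset.mem_filter] at hf
    rw [Finset.mem_powersetCard]
    exact ⟨Finset.subset_univ _,
      by rw [Finset.card_image_of_injective _ hf.2, Finset.card_univ, Fintype.card_fin]⟩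

lemma key_sum (r n : ℕ) (hr : 3 ≤ r) (hn : r ≤ n) (x : Fin n → ℂ) :
    ∑ j, ∑ f : Fin (r-1) → Fin n, adjEntry r (completeEdges r n) j f * ∏ i, x (f i)
    = ((n - (r-1) : ℕ) : ℂ) * ∑ S ∈ Finset.univ.powersetCard (r-1), ∏ i ∈ S, x i := by
  have hfac : ((r-1).factorial : ℂ) ≠ 0 := Nat.cast_ne_zero.mpr (Nat.factorial_ne_zero _)
  calc ∑ j, ∑ f : Fin (r-1) → Fin n, adjEntry r (completeEdges r n) j f * ∏ i, x (f i)
      = ∑ f : Fin (r-1) → Fin n, ∑ j,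
          (if Function.Injective f ∧ ∀ i, f i ≠ j then
            (1 / ((r-1).factorial : ℂ)) * ∏ i, x (f i) else 0) := by
        rw [Finset.sum_comm]
        refine Finset.sum_congr rfl fun f _ => Finset.sum_congr rfl fun j _ => ?_
        rw [adjEntry_complete r n (by omega), ite_mul, zero_mul]
    _ = ∑ f : Fin (r-1) → Fin n, (if Function.Injective f then
          ((n - (r-1) : ℕ) : ℂ) * ((1 / ((r-1).factorial : ℂ)) * ∏ i, x (f i)) else 0) := by
        refine Finset.sum_congr rfl fun f _ => ?_
        by_cases hf : Function.Injective f
        · simp only [hf, true_and, if_pos]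
          rw [← Finset.sum_filter]
          have hfilter : Finset.univ.filter (fun j : Fin n => ∀ i, f i ≠ j)
              = Finset.univ \ Finset.image f Finset.univ := by
            ext j
            simp
          rw [Finset.sum_const, hfilter, Finset.card_sdiff_of_subset (Finset.subset_univ _),
            Finset.card_univ, Fintype.card_fin,
            Finset.card_image_of_injective _ hf, Finset.card_univ, Fintype.card_fin,
            nsmul_eq_mul]
        · simp only [hf, false_and, if_false, Finset.sum_const_zero, if_neg, not_false_iff]
    _ = ((n - (r-1) : ℕ) : ℂ) * ((1 / ((r-1).factorial : ℂ)) *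
          ∑ f ∈ Finset.univ.filter (fun f : Fin (r-1) → Fin n => Function.Injective f),
            ∏ i, x (f i)) := by
        rw [← Finset.sum_filter, Finset.mul_sum, Finset.mul_sum]
    _ = ((n - (r-1) : ℕ) : ℂ) * ∑ S ∈ Finset.univ.powersetCard (r-1), ∏ i ∈ S, x i := by
        rw [sum_inj]
        rw [← mul_assoc ((1:ℂ)/_), one_div, inv_mul_cancel₀ hfac, one_mul]

/-- eigenpairs of the adjacency hypermatrix of `K_n^{(r)}`. -/
theorem stmt1 (r n : ℕ) (hr : 3 ≤ r) (hn : r ≤ n) :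
    (∀ y : Fin n → ℂ,
        IsEigenpair r (adjEntry r (completeEdges r n)) 0 y → IsNonMainVec r y) ∧
    IsNonMainEigenvalue r (adjEntry r (completeEdges r n)) 0 ∧
    (∀ (lam : ℂ) (y : Fin n → ℂ), lam ≠ 0 →
        IsEigenpair r (adjEntry r (completeEdges r n)) lam y →
        (IsNonMainVec r y ↔ ∑ i, y i ^ (r - 1) = 0)) := by
  have npos : 0 < n := by omega
  have hnk : ((n - (r-1) : ℕ) : ℂ) ≠ 0 := Nat.cast_ne_zero.mpr (by omega)
  have main : ∀ (lam : ℂ) (y : Fin n → ℂ),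
      IsEigenpair r (adjEntry r (completeEdges r n)) lam y →
      ((n - (r-1) : ℕ) : ℂ) * (∑ S ∈ Finset.univ.powersetCard (r-1), ∏ i ∈ S, y i)
        = lam * ∑ j, y j ^ (r-1) := by
    intro lam y hy
    calc ((n - (r-1) : ℕ) : ℂ) * (∑ S ∈ Finset.univ.powersetCard (r-1), ∏ i ∈ S, y i)
        = ∑ j, ∑ f : Fin (r-1) → Fin n,
            adjEntry r (completeEdges r n) j f * ∏ i, y (f i) := (key_sum r n hr hn y).symm
      _ = ∑ j, lam * y j ^ (r-1) := Finset.sum_congr rfl fun j _ => hy.2 j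
      _ = lam * ∑ j, y j ^ (r-1) := (Finset.mul_sum _ _ _).symm
  set v0 : Fin n := ⟨0, npos⟩
  refine ⟨?_, ?_, ?_⟩
  · intro y hy
    have h := main 0 y hy
    rw [zero_mul] at h
    rcases mul_eq_zero.mp h with h' | h'
    · exact absurd h' hnk
    · exact h'
  · refine ⟨fun i => if i = v0 then 1 else 0, ⟨?_, ?_⟩, ?_⟩
    · intro h
      have := congrFun h v0
      simp at this
    · intro j
      rw [zero_mul]
      refine Finset.sum_eq_zero fun f _ => ?_
      rw [adjEntry_complete r n (by omega)]
      split_ifs with h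
      · have hij : (⟨0, by omega⟩ : Fin (r-1)) ≠ ⟨1, by omega⟩ := by
          simp [Fin.ext_iff]
        have hf := h.1.ne hij
        have : ∃ i : Fin (r-1), f i ≠ v0 := by
          by_cases h0 : f ⟨0, by omega⟩ = v0
          · exact ⟨⟨1, by omega⟩, fun h1 => hf (h0.trans h1.symm)⟩
          · exact ⟨⟨0, by omega⟩, h0⟩
        obtain ⟨i, hi⟩ := this
        have hz : (fun i => if i = v0 then (1:ℂ) else 0) (f i) = 0 := if_neg hi
        rw [Finset.prod_eq_zero (Finset.mem_univ i) hz, mul_zero]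
      · rw [zero_mul]
    · refine Finset.sum_eq_zero fun S hS => ?_
      rw [Finset.mem_powersetCard] at hS
      have h2 : 1 < S.card := by omega
      obtain ⟨a, ha, b, hb, hab⟩ := Finset.one_lt_card.mp h2
      have : ∃ c ∈ S, c ≠ v0 := by
        by_cases h0 : a = v0
        · exact ⟨b, hb, fun h1 => hab (h0.trans h1.symm)⟩
        · exact ⟨a, ha, h0⟩
      obtain ⟨c, hc, hcv⟩ := this
      have hz : (fun i => if i = v0 then (1:ℂ) else 0) c = 0 := if_neg hcv
      exact Finset.prod_eq_zero hc hz
  · intro lam y hlam hy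
    have h := main lam y hy
    constructor
    · intro he
      rw [he, mul_zero] at h
      rcases mul_eq_zero.mp h.symm with h' | h'
      · exact absurd h' hlam
      · exact h'
    · intro hs
      rw [hs, mul_zero] at h
      rcases mul_eq_zero.mp h with h' | h'
      · exact absurd h' hnk
      · exact h'
end

section
/- Let H1 and H2 be r-uniform hypergraphs (r ≥ 3) on disjoint vertex sets V1, V2 of sizes n1 and n2, and let H = H1 ∨ H2 be their join. Set c1 = ∑_{t=1}^{r−1} binom(n2, t)·binom(n1−1, r−1−t). If x is a non-main eigenvector of A(H1) (resp. L(H1), resp. Q(H1)) for the eigenvalue λ, then the vector y on V1 ∪ V2 that equals x on V1 and 0 on V2 is a non-main eigenvector of A(H) for the eigenvalue λ (resp. of L(H) for the eigenvalue λ + c1, resp. of Q(H) for the eigenvalue λ + c1). The same holds with the roles of H1 and H2 interchanged (with c2 = ∑_{t=1}^{r−1} binom(n1, t)·binom(n2−1, r−1−t)). -/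
open Finset
open scoped Classical

/-- The join `H₁ ∨ H₂` of two `r`-uniform hypergraphs on disjoint vertex sets
`Fin n₁` and `Fin n₂`: the hyperedges of `H₁`, those of `H₂`, and all `r`-element
subsets of the union meeting both sides. -/
noncomputable def joinEdges (r n₁ n₂ : ℕ) (E₁ : Finset (Finset (Fin n₁)))
    (E₂ : Finset (Finset (Fin n₂))) : Finset (Finset (Fin n₁ ⊕ Fin n₂)) :=
  E₁.image (fun e => e.map ⟨Sum.inl, Sum.inl_injective⟩) ∪
  E₂.image (fun e => e.map ⟨Sum.inr, Sum.inr_injective⟩) ∪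
  (Finset.univ.powersetCard r).filter
    (fun e => (∃ v ∈ e, v.isLeft) ∧ (∃ v ∈ e, v.isRight))

set_option maxHeartbeats 1000000

section Helpers

set_option linter.unusedSectionVars false in
/-- Restrict a sum over functions into a sum type to the all-left functions. -/
lemma sum_restrict_left {α β : Type*} [Fintype α] [Fintype β]
    (k : ℕ) (T : (Fin k → α ⊕ β) → ℂ) (x : α → ℂ) :
    ∑ f : Fin k → α ⊕ β, T f * ∏ i, Sum.elim x (fun _ : β => (0:ℂ)) (f i)
      = ∑ g : Fin k → α, T (Sum.inl ∘ g) * ∏ i, x (g i) := by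
  rw [← Finset.sum_filter_of_ne (p := fun f : Fin k → α ⊕ β => ∀ i, (f i).isLeft)
    (by
      intro f _ hne i
      by_contra h
      rcases Sum.isRight_iff.mp (Sum.not_isLeft.mp h) with ⟨b, hb⟩
      exact hne (by rw [Finset.prod_eq_zero (Finset.mem_univ i) (by rw [hb]; simp), mul_zero]))]
  refine (Finset.sum_nbij (fun g => Sum.inl ∘ g) ?_ ?_ ?_ ?_).symm
  · intro g _; simp [Finset.mem_filter]
  · intro g _ g' _ h
    funext i
    exact Sum.inl_injective (congrFun h i)
  · intro f hf
    simp only [Finset.coe_filter, Set.mem_setOf_eq, Finset.mem_univ, true_and] at hf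
    refine ⟨fun i => (f i).getLeft (hf i), by simp, ?_⟩
    funext i
    simp
  · intro g _
    congr 1

set_option linter.unusedSectionVars false in
/-- Restrict a sum over functions into a sum type to the all-right functions. -/
lemma sum_restrict_right {α β : Type*} [Fintype α] [Fintype β]
    (k : ℕ) (T : (Fin k → α ⊕ β) → ℂ) (z : β → ℂ) :
    ∑ f : Fin k → α ⊕ β, T f * ∏ i, Sum.elim (fun _ : α => (0:ℂ)) z (f i)
      = ∑ g : Fin k → β, T (Sum.inr ∘ g) * ∏ i, z (g i) := by
  rw [← Finset.sum_filter_of_ne (p := fun f : Fin k → α ⊕ β => ∀ i, (f i).isRight)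
    (by
      intro f _ hne i
      by_contra h
      rcases Sum.isLeft_iff.mp (Sum.not_isRight.mp h) with ⟨b, hb⟩
      exact hne (by rw [Finset.prod_eq_zero (Finset.mem_univ i) (by rw [hb]; simp), mul_zero]))]
  refine (Finset.sum_nbij (fun g => Sum.inr ∘ g) ?_ ?_ ?_ ?_).symm
  · intro g _; simp [Finset.mem_filter]
  · intro g _ g' _ h
    funext i
    exact Sum.inr_injective (congrFun h i)
  · intro f hf
    simp only [Finset.coe_filter, Set.mem_setOf_eq, Finset.mem_univ, true_and] at hf
    refine ⟨fun i => (f i).getRight (hf i), by simp, ?_⟩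
    funext i
    simp
  · intro g _
    congr 1

/-- The sum over injective tuples equals `k!` times the elementary symmetric sum. -/
lemma sum_injective_eq {α : Type*} [Fintype α] [DecidableEq α] (k : ℕ) (x : α → ℂ) :
    ∑ g ∈ Finset.univ.filter (fun g : Fin k → α => Function.Injective g), ∏ i, x (g i)
      = (k.factorial : ℂ) * ∑ S ∈ Finset.univ.powersetCard k, ∏ v ∈ S, x v := by
  rw [← Finset.sum_fiberwise_of_maps_to (g := fun g : Fin k → α => Finset.image g Finset.univ)
    (t := Finset.univ.powersetCard k)
    (by
      intro g hg
      simp only [Finset.mem_filter] at hg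
      rw [Finset.mem_powersetCard]
      exact ⟨Finset.subset_univ _, by
        rw [Finset.card_image_of_injective _ hg.2, Finset.card_univ, Fintype.card_fin]⟩)]
  rw [Finset.mul_sum]
  refine Finset.sum_congr rfl fun S hS => ?_
  rw [Finset.mem_powersetCard] at hS
  have hfib : ∀ g ∈ (Finset.univ.filter fun g : Fin k → α => Function.Injective g).filter
      (fun g => Finset.image g Finset.univ = S), ∏ i, x (g i) = ∏ v ∈ S, x v := by
    intro g hg
    simp only [Finset.mem_filter, Finset.mem_univ, true_and] at hg
    rw [← hg.2, Finset.prod_image (fun i _ j _ h => hg.1 h)]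
  rw [Finset.sum_congr rfl hfib, Finset.sum_const, nsmul_eq_mul]
  congr 1
  have hcard : ((Finset.univ.filter fun g : Fin k → α => Function.Injective g).filter
      (fun g => Finset.image g Finset.univ = S)).card = k.factorial := by
    have hset : (Finset.univ.filter fun g : Fin k → α => Function.Injective g).filter
        (fun g => Finset.image g Finset.univ = S)
        = Finset.univ.filter (fun g : Fin k → α => Function.Injective g ∧ ∀ i, g i ∈ S) := by
      ext g
      simp only [Finset.mem_filter, Finset.mem_univ, true_and]
      constructor
      · rintro ⟨h1, h2⟩
        exact ⟨h1, fun i => h2 ▸ Finset.mem_image_of_mem g (Finset.mem_univ i)⟩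
      · rintro ⟨h1, h2⟩
        refine ⟨h1, Finset.eq_of_subset_of_card_le ?_ ?_⟩
        · intro v hv
          rcases Finset.mem_image.mp hv with ⟨i, _, rfl⟩
          exact h2 i
        · rw [hS.2, Finset.card_image_of_injective _ h1, Finset.card_univ, Fintype.card_fin]
    rw [hset, ← Fintype.card_subtype]
    have e : {g : Fin k → α // Function.Injective g ∧ ∀ i, g i ∈ S} ≃ (Fin k ↪ {v : α // v ∈ S}) :=
      { toFun := fun g => ⟨fun i => ⟨g.1 i, g.2.2 i⟩, fun i j h => g.2.1 (by
          simpa using congrArg Subtype.val h)⟩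
        invFun := fun e => ⟨fun i => (e i).1, ⟨fun i j h => e.injective (Subtype.ext h),
          fun i => (e i).2⟩⟩
        left_inv := fun g => rfl
        right_inv := fun e => rfl }
    rw [Fintype.card_congr e, Fintype.card_embedding_eq, Fintype.card_coe, hS.2,
      Fintype.card_fin, Nat.descFactorial_self]
  rw [hcard]

lemma sum_ite_inj_eq_zero {α : Type*} [Fintype α] [DecidableEq α] (k : ℕ) (x : α → ℂ)
    (hx : ∑ S ∈ Finset.univ.powersetCard k, ∏ v ∈ S, x v = 0) (c : ℂ) :
    ∑ g : Fin k → α, (if Function.Injective g then c else 0) * ∏ i, x (g i) = 0 := by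
  have h : ∀ g : Fin k → α, (if Function.Injective g then c else 0) * ∏ i, x (g i)
      = if Function.Injective g then c * ∏ i, x (g i) else 0 := by
    intro g; split <;> simp
  rw [Finset.sum_congr rfl fun g _ => h g, Finset.sum_ite, Finset.sum_const_zero, add_zero,
    ← Finset.mul_sum, sum_injective_eq, hx, mul_zero, mul_zero]

set_option linter.unusedSectionVars false in
lemma diag_sum {α : Type*} [Fintype α] (k : ℕ) (j : α) (d : ℂ) (y : α → ℂ)
    (inst : ∀ f : Fin k → α, Decidable (∀ i, f i = j)) :
    ∑ f : Fin k → α, @ite ℂ (∀ i, f i = j) (inst f) d 0 * ∏ i, y (f i) = d * y j ^ k := by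
  rw [Finset.sum_eq_single (fun _ => j)]
  · rw [if_pos (fun _ => rfl), Finset.prod_const, Finset.card_univ, Fintype.card_fin]
  · intro f _ hf
    rw [if_neg (fun h => hf (funext h)), zero_mul]
  · simp

set_option linter.unusedSectionVars false in
lemma nonmain_left {α β : Type*} [Fintype α] [Fintype β] [DecidableEq α] [DecidableEq β]
    (k : ℕ) (x : α → ℂ)
    (hx : ∑ S ∈ Finset.univ.powersetCard k, ∏ v ∈ S, x v = 0) :
    ∑ S ∈ (Finset.univ : Finset (α ⊕ β)).powersetCard k, ∏ v ∈ S,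
      Sum.elim x (fun _ : β => (0:ℂ)) v = 0 := by
  rw [← Finset.sum_filter_of_ne (p := fun S : Finset (α ⊕ β) => ∀ v ∈ S, v.isLeft)
    (by
      intro S _ hne v hv
      by_contra h
      rcases Sum.isRight_iff.mp (Sum.not_isLeft.mp h) with ⟨b, hb⟩
      exact hne (Finset.prod_eq_zero hv (by rw [hb]; simp)))]
  rw [← hx]
  refine (Finset.sum_nbij (fun S : Finset α => S.map ⟨Sum.inl, Sum.inl_injective⟩)
    ?_ ?_ ?_ ?_).symm
  · intro S hS
    simp only [Finset.mem_powersetCard] at hS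
    simp only [Finset.mem_filter, Finset.mem_powersetCard]
    refine ⟨⟨Finset.subset_univ _, by rw [Finset.card_map]; exact hS.2⟩, ?_⟩
    intro v hv
    rcases Finset.mem_map.mp hv with ⟨a, _, rfl⟩
    simp
  · intro S _ S' _ h
    exact Finset.map_injective _ h
  · intro S hS
    simp only [Finset.coe_filter, Set.mem_setOf_eq, Finset.mem_powersetCard] at hS
    have h2 : S.toRight = ∅ := by
      rw [Finset.eq_empty_iff_forall_notMem]
      intro b hb
      have := hS.2 _ (Finset.mem_toRight.mp hb)
      simp at this
    refine ⟨S.toLeft, ?_, ?_⟩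
    · simp only [Finset.coe_filter, Set.mem_setOf_eq, Finset.mem_powersetCard,
        Finset.mem_coe, Finset.mem_powersetCard]
      refine ⟨Finset.subset_univ _, ?_⟩
      have h3 := Finset.card_toLeft_add_card_toRight (u := S)
      rw [h2] at h3
      simp only [Finset.card_empty, add_zero] at h3
      rw [h3, hS.1.2]
    · have h3 := Finset.toLeft_disjSum_toRight (u := S)
      rw [h2, Finset.disjSum_empty] at h3
      exact h3
  · intro S _
    rw [Finset.prod_map]
    rfl

set_option linter.unusedSectionVars false in
lemma nonmain_right {α β : Type*} [Fintype α] [Fintype β] [DecidableEq α] [DecidableEq β]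
    (k : ℕ) (z : β → ℂ)
    (hz : ∑ S ∈ Finset.univ.powersetCard k, ∏ v ∈ S, z v = 0) :
    ∑ S ∈ (Finset.univ : Finset (α ⊕ β)).powersetCard k, ∏ v ∈ S,
      Sum.elim (fun _ : α => (0:ℂ)) z v = 0 := by
  rw [← Finset.sum_filter_of_ne (p := fun S : Finset (α ⊕ β) => ∀ v ∈ S, v.isRight)
    (by
      intro S _ hne v hv
      by_contra h
      rcases Sum.isLeft_iff.mp (Sum.not_isRight.mp h) with ⟨b, hb⟩
      exact hne (Finset.prod_eq_zero hv (by rw [hb]; simp)))]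
  rw [← hz]
  refine (Finset.sum_nbij (fun S : Finset β => S.map ⟨Sum.inr, Sum.inr_injective⟩)
    ?_ ?_ ?_ ?_).symm
  · intro S hS
    simp only [Finset.mem_powersetCard] at hS
    simp only [Finset.mem_filter, Finset.mem_powersetCard]
    refine ⟨⟨Finset.subset_univ _, by rw [Finset.card_map]; exact hS.2⟩, ?_⟩
    intro v hv
    rcases Finset.mem_map.mp hv with ⟨a, _, rfl⟩
    simp
  · intro S _ S' _ h
    exact Finset.map_injective _ h
  · intro S hS
    simp only [Finset.coe_filter, Set.mem_setOf_eq, Finset.mem_powersetCard] at hS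
    have h2 : S.toLeft = ∅ := by
      rw [Finset.eq_empty_iff_forall_notMem]
      intro b hb
      have := hS.2 _ (Finset.mem_toLeft.mp hb)
      simp at this
    refine ⟨S.toRight, ?_, ?_⟩
    · simp only [Finset.coe_filter, Set.mem_setOf_eq, Finset.mem_powersetCard,
        Finset.mem_coe, Finset.mem_powersetCard]
      refine ⟨Finset.subset_univ _, ?_⟩
      have h3 := Finset.card_toLeft_add_card_toRight (u := S)
      rw [h2] at h3
      simp only [Finset.card_empty, zero_add] at h3
      rw [h3, hS.1.2]
    · have h3 := Finset.toLeft_disjSum_toRight (u := S)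
      rw [h2, Finset.empty_disjSum] at h3
      exact h3
  · intro S _
    rw [Finset.prod_map]
    rfl

lemma cross_count {α β : Type*} [Fintype α] [Fintype β] [DecidableEq α] [DecidableEq β]
    (r : ℕ) (j : α) :
    ((((Finset.univ : Finset (α ⊕ β)).powersetCard r).filter
        (fun e => ((∃ v ∈ e, v.isLeft) ∧ (∃ v ∈ e, v.isRight)) ∧ Sum.inl j ∈ e)).card)
      = ∑ t ∈ Finset.Icc 1 (r-1),
          (Fintype.card β).choose t * (Fintype.card α - 1).choose (r-1-t) := by
  rw [Finset.card_eq_sum_card_fiberwise (f := fun e : Finset (α ⊕ β) => e.toRight.card)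
    (t := Finset.Icc 1 (r-1))
    (by
      intro e he
      simp only [Finset.mem_coe, Finset.mem_filter, Finset.mem_powersetCard] at he
      obtain ⟨⟨_, hcard⟩, ⟨_, hR⟩, hj⟩ := he
      obtain ⟨v, hv, hvR⟩ := hR
      rcases Sum.isRight_iff.mp hvR with ⟨b, rfl⟩
      have h1 : 1 ≤ e.toRight.card :=
        Finset.card_pos.mpr ⟨b, Finset.mem_toRight.mpr hv⟩
      have h2 : 1 ≤ e.toLeft.card :=
        Finset.card_pos.mpr ⟨j, Finset.mem_toLeft.mpr hj⟩
      have h3 := Finset.card_toLeft_add_card_toRight (u := e)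
      simp only [Finset.mem_coe, Finset.mem_Icc]
      omega)]
  refine Finset.sum_congr rfl fun t ht => ?_
  rw [Finset.mem_Icc] at ht
  have hkey : ((((Finset.univ : Finset (α ⊕ β)).powersetCard r).filter
        (fun e => ((∃ v ∈ e, v.isLeft) ∧ (∃ v ∈ e, v.isRight)) ∧ Sum.inl j ∈ e)).filter
        (fun e => e.toRight.card = t)).card
      = ((Finset.univ.powersetCard t : Finset (Finset β)) ×ˢ
          (((Finset.univ : Finset α).erase j).powersetCard (r-1-t))).card := by
    refine Finset.card_bij' (fun e _ => (e.toRight, (e.toLeft).erase j))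
      (fun p _ => ((insert j p.2).disjSum p.1)) ?_ ?_ ?_ ?_
    · intro e he
      simp only [Finset.mem_filter, Finset.mem_powersetCard] at he
      obtain ⟨⟨⟨_, hcard⟩, _, hj⟩, hT⟩ := he
      have hjL : j ∈ e.toLeft := Finset.mem_toLeft.mpr hj
      have h3 := Finset.card_toLeft_add_card_toRight (u := e)
      rw [Finset.mem_product, Finset.mem_powersetCard, Finset.mem_powersetCard]
      refine ⟨⟨Finset.subset_univ _, hT⟩, ?_, ?_⟩
      · exact Finset.erase_subset_erase _ (Finset.subset_univ _)
      · rw [Finset.card_erase_of_mem hjL]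
        omega
    · intro p hp
      rw [Finset.mem_product, Finset.mem_powersetCard, Finset.mem_powersetCard] at hp
      obtain ⟨⟨_, hB⟩, hA, hAcard⟩ := hp
      have hjA : j ∉ p.2 := fun h => (Finset.mem_erase.mp (hA h)).1 rfl
      have hBne : p.1.Nonempty := Finset.card_pos.mp (by omega)
      simp only [Finset.mem_filter, Finset.mem_powersetCard]
      refine ⟨⟨⟨Finset.subset_univ _, ?_⟩, ⟨?_, ?_⟩, ?_⟩, ?_⟩
      · rw [Finset.card_disjSum, Finset.card_insert_of_notMem hjA]
        omega
      · exact ⟨Sum.inl j, by simp, rfl⟩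
      · obtain ⟨b, hb⟩ := hBne
        exact ⟨Sum.inr b, by simp [hb], rfl⟩
      · simp
      · simp [hB]
    · intro e he
      simp only [Finset.mem_filter, Finset.mem_powersetCard] at he
      obtain ⟨⟨_, _, hj⟩, _⟩ := he
      have hjL : j ∈ e.toLeft := Finset.mem_toLeft.mpr hj
      dsimp only
      rw [Finset.insert_erase hjL, Finset.toLeft_disjSum_toRight]
    · intro p hp
      rw [Finset.mem_product, Finset.mem_powersetCard, Finset.mem_powersetCard] at hp
      have hjA : j ∉ p.2 := fun h => (Finset.mem_erase.mp (hp.2.1 h)).1 rfl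
      simp [Finset.erase_insert hjA]
  rw [hkey, Finset.card_product, Finset.card_powersetCard, Finset.card_powersetCard,
    Finset.card_univ, Finset.card_erase_of_mem (Finset.mem_univ j), Finset.card_univ]

lemma cross_count' {α β : Type*} [Fintype α] [Fintype β] [DecidableEq α] [DecidableEq β]
    (r : ℕ) (j : β) :
    ((((Finset.univ : Finset (α ⊕ β)).powersetCard r).filter
        (fun e => ((∃ v ∈ e, v.isLeft) ∧ (∃ v ∈ e, v.isRight)) ∧ Sum.inr j ∈ e)).card)
      = ∑ t ∈ Finset.Icc 1 (r-1),
          (Fintype.card α).choose t * (Fintype.card β - 1).choose (r-1-t) := by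
  rw [Finset.card_eq_sum_card_fiberwise (f := fun e : Finset (α ⊕ β) => e.toLeft.card)
    (t := Finset.Icc 1 (r-1))
    (by
      intro e he
      simp only [Finset.mem_coe, Finset.mem_filter, Finset.mem_powersetCard] at he
      obtain ⟨⟨_, hcard⟩, ⟨hL, _⟩, hj⟩ := he
      obtain ⟨v, hv, hvL⟩ := hL
      rcases Sum.isLeft_iff.mp hvL with ⟨a, rfl⟩
      have h1 : 1 ≤ e.toLeft.card := Finset.card_pos.mpr ⟨a, Finset.mem_toLeft.mpr hv⟩
      have h2 : 1 ≤ e.toRight.card := Finset.card_pos.mpr ⟨j, Finset.mem_toRight.mpr hj⟩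
      have h3 := Finset.card_toLeft_add_card_toRight (u := e)
      simp only [Finset.mem_coe, Finset.mem_Icc]
      omega)]
  refine Finset.sum_congr rfl fun t ht => ?_
  rw [Finset.mem_Icc] at ht
  have hkey : ((((Finset.univ : Finset (α ⊕ β)).powersetCard r).filter
        (fun e => ((∃ v ∈ e, v.isLeft) ∧ (∃ v ∈ e, v.isRight)) ∧ Sum.inr j ∈ e)).filter
        (fun e => e.toLeft.card = t)).card
      = (((Finset.univ : Finset α).powersetCard t) ×ˢ
          (((Finset.univ : Finset β).erase j).powersetCard (r-1-t))).card := by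
    refine Finset.card_bij' (fun e _ => (e.toLeft, (e.toRight).erase j))
      (fun p _ => (p.1.disjSum (insert j p.2))) ?_ ?_ ?_ ?_
    · intro e he
      simp only [Finset.mem_filter, Finset.mem_powersetCard] at he
      obtain ⟨⟨⟨_, hcard⟩, _, hj⟩, hT⟩ := he
      have hjR : j ∈ e.toRight := Finset.mem_toRight.mpr hj
      have h3 := Finset.card_toLeft_add_card_toRight (u := e)
      rw [Finset.mem_product, Finset.mem_powersetCard, Finset.mem_powersetCard]
      refine ⟨⟨Finset.subset_univ _, hT⟩, ?_, ?_⟩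
      · exact Finset.erase_subset_erase _ (Finset.subset_univ _)
      · rw [Finset.card_erase_of_mem hjR]
        omega
    · intro p hp
      rw [Finset.mem_product, Finset.mem_powersetCard, Finset.mem_powersetCard] at hp
      obtain ⟨⟨_, hB⟩, hA, hAcard⟩ := hp
      have hjA : j ∉ p.2 := fun h => (Finset.mem_erase.mp (hA h)).1 rfl
      have hBne : p.1.Nonempty := Finset.card_pos.mp (by omega)
      simp only [Finset.mem_filter, Finset.mem_powersetCard]
      refine ⟨⟨⟨Finset.subset_univ _, ?_⟩, ⟨?_, ?_⟩, ?_⟩, ?_⟩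
      · rw [Finset.card_disjSum, Finset.card_insert_of_notMem hjA]
        omega
      · obtain ⟨b, hb⟩ := hBne
        exact ⟨Sum.inl b, by simp [hb], rfl⟩
      · exact ⟨Sum.inr j, by simp, rfl⟩
      · simp
      · simp [hB]
    · intro e he
      simp only [Finset.mem_filter, Finset.mem_powersetCard] at he
      obtain ⟨⟨_, _, hj⟩, _⟩ := he
      have hjR : j ∈ e.toRight := Finset.mem_toRight.mpr hj
      dsimp only
      rw [Finset.insert_erase hjR, Finset.toLeft_disjSum_toRight]
    · intro p hp
      rw [Finset.mem_product, Finset.mem_powersetCard, Finset.mem_powersetCard] at hp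
      have hjA : j ∉ p.2 := fun h => (Finset.mem_erase.mp (hp.2.1 h)).1 rfl
      simp [Finset.erase_insert hjA]
  rw [hkey, Finset.card_product, Finset.card_powersetCard, Finset.card_powersetCard,
    Finset.card_univ, Finset.card_erase_of_mem (Finset.mem_univ j), Finset.card_univ]

end Helpers

section JoinLemmas

variable {r n₁ n₂ : ℕ} {E₁ : Finset (Finset (Fin n₁))} {E₂ : Finset (Finset (Fin n₂))}

lemma join_mem_left (hr : 0 < r) (hu₂ : ∀ e ∈ E₂, e.card = r) (A : Finset (Fin n₁)) :
    A.map ⟨Sum.inl, Sum.inl_injective⟩ ∈ joinEdges r n₁ n₂ E₁ E₂ ↔ A ∈ E₁ := by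
  unfold joinEdges
  simp only [Finset.mem_union, Finset.mem_image, Finset.mem_filter, Finset.mem_powersetCard]
  constructor
  · rintro ((⟨e, he, heq⟩ | ⟨e, he, heq⟩) | ⟨_, _, ⟨v, hv, hvR⟩⟩)
    · rwa [← Finset.map_injective _ heq]
    · exfalso
      have hne : e.Nonempty := Finset.card_pos.mp (by rw [hu₂ e he]; exact hr)
      obtain ⟨b, hb⟩ := hne
      have hmem : (Sum.inr b : Fin n₁ ⊕ Fin n₂) ∈ A.map ⟨Sum.inl, Sum.inl_injective⟩ := by
        rw [← heq]; simp [hb]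
      rcases Finset.mem_map.mp hmem with ⟨a, _, ha⟩
      exact Sum.inl_ne_inr ha
    · rcases Finset.mem_map.mp hv with ⟨a, _, rfl⟩
      simp at hvR
  · intro h
    exact Or.inl (Or.inl ⟨A, h, rfl⟩)

lemma join_mem_right (hr : 0 < r) (hu₁ : ∀ e ∈ E₁, e.card = r) (A : Finset (Fin n₂)) :
    A.map ⟨Sum.inr, Sum.inr_injective⟩ ∈ joinEdges r n₁ n₂ E₁ E₂ ↔ A ∈ E₂ := by
  unfold joinEdges
  simp only [Finset.mem_union, Finset.mem_image, Finset.mem_filter, Finset.mem_powersetCard]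
  constructor
  · rintro ((⟨e, he, heq⟩ | ⟨e, he, heq⟩) | ⟨_, ⟨v, hv, hvL⟩, _⟩)
    · exfalso
      have hne : e.Nonempty := Finset.card_pos.mp (by rw [hu₁ e he]; exact hr)
      obtain ⟨b, hb⟩ := hne
      have hmem : (Sum.inl b : Fin n₁ ⊕ Fin n₂) ∈ A.map ⟨Sum.inr, Sum.inr_injective⟩ := by
        rw [← heq]; simp [hb]
      rcases Finset.mem_map.mp hmem with ⟨a, _, ha⟩
      exact Sum.inl_ne_inr ha.symm
    · rwa [← Finset.map_injective _ heq]
    · rcases Finset.mem_map.mp hv with ⟨a, _, rfl⟩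
      simp at hvL
  · intro h
    exact Or.inl (Or.inr ⟨A, h, rfl⟩)

lemma join_mem_cross {S : Finset (Fin n₁ ⊕ Fin n₂)} (hcard : S.card = r)
    (hL : ∃ v ∈ S, v.isLeft) (hR : ∃ v ∈ S, v.isRight) : S ∈ joinEdges r n₁ n₂ E₁ E₂ := by
  unfold joinEdges
  rw [Finset.mem_union]
  exact Or.inr (Finset.mem_filter.mpr ⟨Finset.mem_powersetCard.mpr
    ⟨Finset.subset_univ _, hcard⟩, hL, hR⟩)

lemma image_comp_inl (g : Fin (r-1) → Fin n₁) :
    Finset.image (Sum.inl ∘ g : Fin (r-1) → Fin n₁ ⊕ Fin n₂) Finset.univ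
      = (Finset.image g Finset.univ).map ⟨Sum.inl, Sum.inl_injective⟩ := by
  rw [Finset.map_eq_image, Finset.image_image]
  rfl

lemma image_comp_inr (g : Fin (r-1) → Fin n₂) :
    Finset.image (Sum.inr ∘ g : Fin (r-1) → Fin n₁ ⊕ Fin n₂) Finset.univ
      = (Finset.image g Finset.univ).map ⟨Sum.inr, Sum.inr_injective⟩ := by
  rw [Finset.map_eq_image, Finset.image_image]
  rfl

lemma adjJoin_ll (hr : 0 < r) (hu₂ : ∀ e ∈ E₂, e.card = r) (j : Fin n₁)
    (g : Fin (r-1) → Fin n₁) :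
    adjEntry r (joinEdges r n₁ n₂ E₁ E₂) (Sum.inl j) (Sum.inl ∘ g) = adjEntry r E₁ j g := by
  unfold adjEntry
  refine if_congr ?_ rfl rfl
  rw [image_comp_inl,
    show (Sum.inl j : Fin n₁ ⊕ Fin n₂)
      = (⟨Sum.inl, Sum.inl_injective⟩ : Fin n₁ ↪ Fin n₁ ⊕ Fin n₂) j from rfl,
    ← Finset.map_insert ⟨Sum.inl, Sum.inl_injective⟩ j]
  constructor
  · rintro ⟨h1, h2, h3⟩
    exact ⟨fun i i' h => h1 (congrArg Sum.inl h), fun i h => h2 i (congrArg Sum.inl h),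
      (join_mem_left hr hu₂ _).mp h3⟩
  · rintro ⟨h1, h2, h3⟩
    exact ⟨fun i i' h => h1 (Sum.inl_injective h),
      fun i h => h2 i (Sum.inl_injective h), (join_mem_left hr hu₂ _).mpr h3⟩

lemma adjJoin_rr (hr : 0 < r) (hu₁ : ∀ e ∈ E₁, e.card = r) (j : Fin n₂)
    (g : Fin (r-1) → Fin n₂) :
    adjEntry r (joinEdges r n₁ n₂ E₁ E₂) (Sum.inr j) (Sum.inr ∘ g) = adjEntry r E₂ j g := by
  unfold adjEntry
  refine if_congr ?_ rfl rfl
  rw [image_comp_inr,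
    show (Sum.inr j : Fin n₁ ⊕ Fin n₂)
      = (⟨Sum.inr, Sum.inr_injective⟩ : Fin n₂ ↪ Fin n₁ ⊕ Fin n₂) j from rfl,
    ← Finset.map_insert ⟨Sum.inr, Sum.inr_injective⟩ j]
  constructor
  · rintro ⟨h1, h2, h3⟩
    exact ⟨fun i i' h => h1 (congrArg Sum.inr h), fun i h => h2 i (congrArg Sum.inr h),
      (join_mem_right hr hu₁ _).mp h3⟩
  · rintro ⟨h1, h2, h3⟩
    exact ⟨fun i i' h => h1 (Sum.inr_injective h),
      fun i h => h2 i (Sum.inr_injective h), (join_mem_right hr hu₁ _).mpr h3⟩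

lemma adjJoin_rl (hr : 3 ≤ r) (b : Fin n₂) (g : Fin (r-1) → Fin n₁) :
    adjEntry r (joinEdges r n₁ n₂ E₁ E₂) (Sum.inr b) (Sum.inl ∘ g)
      = if Function.Injective g then 1 / ((r-1).factorial : ℂ) else 0 := by
  unfold adjEntry
  refine if_congr ?_ rfl rfl
  constructor
  · rintro ⟨h1, _, _⟩
    exact fun i i' h => h1 (congrArg Sum.inl h)
  · intro hg
    have hinj : Function.Injective (Sum.inl ∘ g : Fin (r-1) → Fin n₁ ⊕ Fin n₂) :=
      fun i i' h => hg (Sum.inl_injective h)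
    refine ⟨hinj, fun i h => Sum.inl_ne_inr h, ?_⟩
    have hb : (Sum.inr b : Fin n₁ ⊕ Fin n₂) ∉ Finset.image (Sum.inl ∘ g) Finset.univ := by
      intro h
      rcases Finset.mem_image.mp h with ⟨i, _, hi⟩
      exact Sum.inl_ne_inr hi
    refine join_mem_cross ?_ ?_ ?_
    · rw [Finset.card_insert_of_notMem hb, Finset.card_image_of_injective _ hinj,
        Finset.card_univ, Fintype.card_fin]
      omega
    · refine ⟨Sum.inl (g ⟨0, by omega⟩), ?_, rfl⟩
      exact Finset.mem_insert_of_mem (Finset.mem_image_of_mem _ (Finset.mem_univ _))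
    · exact ⟨Sum.inr b, Finset.mem_insert_self _ _, rfl⟩

lemma adjJoin_lr (hr : 3 ≤ r) (a : Fin n₁) (g : Fin (r-1) → Fin n₂) :
    adjEntry r (joinEdges r n₁ n₂ E₁ E₂) (Sum.inl a) (Sum.inr ∘ g)
      = if Function.Injective g then 1 / ((r-1).factorial : ℂ) else 0 := by
  unfold adjEntry
  refine if_congr ?_ rfl rfl
  constructor
  · rintro ⟨h1, _, _⟩
    exact fun i i' h => h1 (congrArg Sum.inr h)
  · intro hg
    have hinj : Function.Injective (Sum.inr ∘ g : Fin (r-1) → Fin n₁ ⊕ Fin n₂) :=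
      fun i i' h => hg (Sum.inr_injective h)
    refine ⟨hinj, fun i h => Sum.inl_ne_inr h.symm, ?_⟩
    have hb : (Sum.inl a : Fin n₁ ⊕ Fin n₂) ∉ Finset.image (Sum.inr ∘ g) Finset.univ := by
      intro h
      rcases Finset.mem_image.mp h with ⟨i, _, hi⟩
      exact Sum.inl_ne_inr hi.symm
    refine join_mem_cross ?_ ?_ ?_
    · rw [Finset.card_insert_of_notMem hb, Finset.card_image_of_injective _ hinj,
        Finset.card_univ, Fintype.card_fin]
      omega
    · exact ⟨Sum.inl a, Finset.mem_insert_self _ _, rfl⟩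
    · refine ⟨Sum.inr (g ⟨0, by omega⟩), ?_, rfl⟩
      exact Finset.mem_insert_of_mem (Finset.mem_image_of_mem _ (Finset.mem_univ _))

lemma deg_join_left (j : Fin n₁) :
    hdegree (joinEdges r n₁ n₂ E₁ E₂) (Sum.inl j)
      = hdegree E₁ j + ∑ t ∈ Finset.Icc 1 (r-1), n₂.choose t * (n₁-1).choose (r-1-t) := by
  unfold hdegree joinEdges
  rw [Finset.filter_union, Finset.filter_union]
  have h2 : (E₂.image (fun e => e.map ⟨Sum.inr, Sum.inr_injective⟩)).filter
      (fun e => Sum.inl j ∈ e) = ∅ := by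
    rw [Finset.eq_empty_iff_forall_notMem]
    intro e he
    rw [Finset.mem_filter, Finset.mem_image] at he
    obtain ⟨⟨e', _, rfl⟩, hj⟩ := he
    rcases Finset.mem_map.mp hj with ⟨a, _, ha⟩
    exact Sum.inl_ne_inr ha.symm
  rw [h2, Finset.union_empty]
  have hd : Disjoint
      ((E₁.image (fun e => e.map ⟨Sum.inl, Sum.inl_injective⟩)).filter
        (fun e => Sum.inl j ∈ e))
      ((((Finset.univ : Finset (Fin n₁ ⊕ Fin n₂)).powersetCard r).filter
        (fun e => (∃ v ∈ e, v.isLeft) ∧ (∃ v ∈ e, v.isRight))).filter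
        (fun e => Sum.inl j ∈ e)) := by
    rw [Finset.disjoint_left]
    intro e he1 he3
    rw [Finset.mem_filter, Finset.mem_image] at he1
    obtain ⟨⟨e', _, rfl⟩, _⟩ := he1
    rw [Finset.mem_filter, Finset.mem_filter] at he3
    obtain ⟨⟨_, _, ⟨v, hv, hvR⟩⟩, _⟩ := he3
    rcases Finset.mem_map.mp hv with ⟨a, _, rfl⟩
    simp at hvR
  rw [Finset.card_union_of_disjoint hd]
  congr 1
  · have h1 : (E₁.image (fun e => e.map ⟨Sum.inl, Sum.inl_injective⟩ :
          Finset (Fin n₁) → Finset (Fin n₁ ⊕ Fin n₂))).filter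
        (fun e => Sum.inl j ∈ e)
        = (E₁.filter (fun e => j ∈ e)).image (fun e => e.map ⟨Sum.inl, Sum.inl_injective⟩) := by
      ext e
      simp only [Finset.mem_filter, Finset.mem_image]
      constructor
      · rintro ⟨⟨e', he', rfl⟩, hj⟩
        exact ⟨e', ⟨he', (Finset.mem_map' _).mp hj⟩, rfl⟩
      · rintro ⟨e', ⟨he', hje'⟩, rfl⟩
        exact ⟨⟨e', he', rfl⟩, (Finset.mem_map' _).mpr hje'⟩
    rw [h1, Finset.card_image_of_injective _ (Finset.map_injective _)]
  · rw [Finset.filter_filter]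
    have h := cross_count (β := Fin n₂) r j
    rwa [Fintype.card_fin, Fintype.card_fin] at h

lemma deg_join_right (j : Fin n₂) :
    hdegree (joinEdges r n₁ n₂ E₁ E₂) (Sum.inr j)
      = hdegree E₂ j + ∑ t ∈ Finset.Icc 1 (r-1), n₁.choose t * (n₂-1).choose (r-1-t) := by
  unfold hdegree joinEdges
  rw [Finset.filter_union, Finset.filter_union]
  have h2 : (E₁.image (fun e => e.map ⟨Sum.inl, Sum.inl_injective⟩)).filter
      (fun e => Sum.inr j ∈ e) = ∅ := by
    rw [Finset.eq_empty_iff_forall_notMem]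
    intro e he
    rw [Finset.mem_filter, Finset.mem_image] at he
    obtain ⟨⟨e', _, rfl⟩, hj⟩ := he
    rcases Finset.mem_map.mp hj with ⟨a, _, ha⟩
    exact Sum.inl_ne_inr ha
  rw [h2, Finset.empty_union]
  have hd : Disjoint
      ((E₂.image (fun e => e.map ⟨Sum.inr, Sum.inr_injective⟩)).filter
        (fun e => Sum.inr j ∈ e))
      ((((Finset.univ : Finset (Fin n₁ ⊕ Fin n₂)).powersetCard r).filter
        (fun e => (∃ v ∈ e, v.isLeft) ∧ (∃ v ∈ e, v.isRight))).filter
        (fun e => Sum.inr j ∈ e)) := by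
    rw [Finset.disjoint_left]
    intro e he1 he3
    rw [Finset.mem_filter, Finset.mem_image] at he1
    obtain ⟨⟨e', _, rfl⟩, _⟩ := he1
    rw [Finset.mem_filter, Finset.mem_filter] at he3
    obtain ⟨⟨_, ⟨v, hv, hvL⟩, _⟩, _⟩ := he3
    rcases Finset.mem_map.mp hv with ⟨a, _, rfl⟩
    simp at hvL
  rw [Finset.card_union_of_disjoint hd]
  congr 1
  · have h1 : (E₂.image (fun e => e.map ⟨Sum.inr, Sum.inr_injective⟩ :
          Finset (Fin n₂) → Finset (Fin n₁ ⊕ Fin n₂))).filter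
        (fun e => Sum.inr j ∈ e)
        = (E₂.filter (fun e => j ∈ e)).image (fun e => e.map ⟨Sum.inr, Sum.inr_injective⟩) := by
      ext e
      simp only [Finset.mem_filter, Finset.mem_image]
      constructor
      · rintro ⟨⟨e', he', rfl⟩, hj⟩
        exact ⟨e', ⟨he', (Finset.mem_map' _).mp hj⟩, rfl⟩
      · rintro ⟨e', ⟨he', hje'⟩, rfl⟩
        exact ⟨⟨e', he', rfl⟩, (Finset.mem_map' _).mpr hje'⟩
    rw [h1, Finset.card_image_of_injective _ (Finset.map_injective _)]
  · rw [Finset.filter_filter]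
    have h := cross_count' (α := Fin n₁) r j
    rwa [Fintype.card_fin, Fintype.card_fin] at h

end JoinLemmas

section MainHelpers

variable {r n₁ n₂ : ℕ} {E₁ : Finset (Finset (Fin n₁))} {E₂ : Finset (Finset (Fin n₂))}

lemma adj_sum_left_inl (hr : 3 ≤ r) (hu₂ : ∀ e ∈ E₂, e.card = r) (x : Fin n₁ → ℂ) (a : Fin n₁) :
    ∑ f : Fin (r-1) → Fin n₁ ⊕ Fin n₂, adjEntry r (joinEdges r n₁ n₂ E₁ E₂) (Sum.inl a) f
        * ∏ i, Sum.elim x (fun _ : Fin n₂ => (0:ℂ)) (f i)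
      = ∑ g : Fin (r-1) → Fin n₁, adjEntry r E₁ a g * ∏ i, x (g i) := by
  rw [sum_restrict_left]
  exact Finset.sum_congr rfl fun g _ => by rw [adjJoin_ll (by omega) hu₂]

lemma adj_sum_left_inr (hr : 3 ≤ r) (x : Fin n₁ → ℂ) (hnm : IsNonMainVec r x) (b : Fin n₂) :
    ∑ f : Fin (r-1) → Fin n₁ ⊕ Fin n₂, adjEntry r (joinEdges r n₁ n₂ E₁ E₂) (Sum.inr b) f
        * ∏ i, Sum.elim x (fun _ : Fin n₂ => (0:ℂ)) (f i) = 0 := by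
  rw [sum_restrict_left, Finset.sum_congr rfl fun g _ => by rw [adjJoin_rl hr]]
  exact sum_ite_inj_eq_zero (r-1) x hnm _

lemma adj_sum_right_inr (hr : 3 ≤ r) (hu₁ : ∀ e ∈ E₁, e.card = r) (z : Fin n₂ → ℂ) (b : Fin n₂) :
    ∑ f : Fin (r-1) → Fin n₁ ⊕ Fin n₂, adjEntry r (joinEdges r n₁ n₂ E₁ E₂) (Sum.inr b) f
        * ∏ i, Sum.elim (fun _ : Fin n₁ => (0:ℂ)) z (f i)
      = ∑ g : Fin (r-1) → Fin n₂, adjEntry r E₂ b g * ∏ i, z (g i) := by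
  rw [sum_restrict_right]
  exact Finset.sum_congr rfl fun g _ => by rw [adjJoin_rr (by omega) hu₁]

lemma adj_sum_right_inl (hr : 3 ≤ r) (z : Fin n₂ → ℂ) (hnm : IsNonMainVec r z) (a : Fin n₁) :
    ∑ f : Fin (r-1) → Fin n₁ ⊕ Fin n₂, adjEntry r (joinEdges r n₁ n₂ E₁ E₂) (Sum.inl a) f
        * ∏ i, Sum.elim (fun _ : Fin n₁ => (0:ℂ)) z (f i) = 0 := by
  rw [sum_restrict_right, Finset.sum_congr rfl fun g _ => by rw [adjJoin_lr hr]]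
  exact sum_ite_inj_eq_zero (r-1) z hnm _

end MainHelpers

/-- non-main eigenvectors of the factors give (non-main) eigenvectors of the
join, for the adjacency (same eigenvalue), Laplacian and signless Laplacian
(eigenvalue shifted by `c₁` resp. `c₂`). -/
theorem stmt3 (r n₁ n₂ : ℕ) (hr : 3 ≤ r)
    (E₁ : Finset (Finset (Fin n₁))) (E₂ : Finset (Finset (Fin n₂)))
    (hu₁ : ∀ e ∈ E₁, e.card = r) (hu₂ : ∀ e ∈ E₂, e.card = r) (lam : ℂ) :
    (∀ x : Fin n₁ → ℂ,
        IsEigenpair r (adjEntry r E₁) lam x → IsNonMainVec r x →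
        IsEigenpair r (adjEntry r (joinEdges r n₁ n₂ E₁ E₂)) lam
            (Sum.elim x fun _ : Fin n₂ => (0 : ℂ)) ∧
          IsNonMainVec r (Sum.elim x fun _ : Fin n₂ => (0 : ℂ))) ∧
    (∀ x : Fin n₁ → ℂ,
        IsEigenpair r (lapEntry r E₁) lam x → IsNonMainVec r x →
        IsEigenpair r (lapEntry r (joinEdges r n₁ n₂ E₁ E₂))
            (lam + ∑ t ∈ Finset.Icc 1 (r - 1),
              ((n₂.choose t * (n₁ - 1).choose (r - 1 - t) : ℕ) : ℂ))
            (Sum.elim x fun _ : Fin n₂ => (0 : ℂ)) ∧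
          IsNonMainVec r (Sum.elim x fun _ : Fin n₂ => (0 : ℂ))) ∧
    (∀ x : Fin n₁ → ℂ,
        IsEigenpair r (signlessEntry r E₁) lam x → IsNonMainVec r x →
        IsEigenpair r (signlessEntry r (joinEdges r n₁ n₂ E₁ E₂))
            (lam + ∑ t ∈ Finset.Icc 1 (r - 1),
              ((n₂.choose t * (n₁ - 1).choose (r - 1 - t) : ℕ) : ℂ))
            (Sum.elim x fun _ : Fin n₂ => (0 : ℂ)) ∧
          IsNonMainVec r (Sum.elim x fun _ : Fin n₂ => (0 : ℂ))) ∧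
    (∀ z : Fin n₂ → ℂ,
        IsEigenpair r (adjEntry r E₂) lam z → IsNonMainVec r z →
        IsEigenpair r (adjEntry r (joinEdges r n₁ n₂ E₁ E₂)) lam
            (Sum.elim (fun _ : Fin n₁ => (0 : ℂ)) z) ∧
          IsNonMainVec r (Sum.elim (fun _ : Fin n₁ => (0 : ℂ)) z)) ∧
    (∀ z : Fin n₂ → ℂ,
        IsEigenpair r (lapEntry r E₂) lam z → IsNonMainVec r z →
        IsEigenpair r (lapEntry r (joinEdges r n₁ n₂ E₁ E₂))
            (lam + ∑ t ∈ Finset.Icc 1 (r - 1),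
              ((n₁.choose t * (n₂ - 1).choose (r - 1 - t) : ℕ) : ℂ))
            (Sum.elim (fun _ : Fin n₁ => (0 : ℂ)) z) ∧
          IsNonMainVec r (Sum.elim (fun _ : Fin n₁ => (0 : ℂ)) z)) ∧
    (∀ z : Fin n₂ → ℂ,
        IsEigenpair r (signlessEntry r E₂) lam z → IsNonMainVec r z →
        IsEigenpair r (signlessEntry r (joinEdges r n₁ n₂ E₁ E₂))
            (lam + ∑ t ∈ Finset.Icc 1 (r - 1),
              ((n₁.choose t * (n₂ - 1).choose (r - 1 - t) : ℕ) : ℂ))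
            (Sum.elim (fun _ : Fin n₁ => (0 : ℂ)) z) ∧
          IsNonMainVec r (Sum.elim (fun _ : Fin n₁ => (0 : ℂ)) z))
    := by
  have hr0 : 0 < r := by omega
  have hk : r - 1 ≠ 0 := by omega
  refine ⟨?_, ?_, ?_, ?_, ?_, ?_⟩
  -- 1 : adjacency, left
  · intro x hx hnm
    obtain ⟨hx0, hxe⟩ := hx
    refine ⟨⟨?_, ?_⟩, nonmain_left (r-1) x hnm⟩
    · intro h
      apply hx0
      funext a
      simpa using congrFun h (Sum.inl a)
    · intro j
      cases j with
      | inl a =>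
        rw [adj_sum_left_inl hr hu₂ x a]
        exact hxe a
      | inr b =>
        rw [adj_sum_left_inr hr x hnm b]
        simp [zero_pow hk]
  -- 2 : Laplacian, left
  · intro x hx hnm
    obtain ⟨hx0, hxe⟩ := hx
    refine ⟨⟨?_, ?_⟩, nonmain_left (r-1) x hnm⟩
    · intro h
      apply hx0
      funext a
      simpa using congrFun h (Sum.inl a)
    · intro j
      simp only [lapEntry, sub_mul, Finset.sum_sub_distrib]
      cases j with
      | inl a =>
        have h := hxe a
        simp only [lapEntry, sub_mul, Finset.sum_sub_distrib] at h
        rw [diag_sum] at h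
        rw [diag_sum, adj_sum_left_inl hr hu₂ x a, deg_join_left]
        simp only [Sum.elim_inl]
        push_cast
        linear_combination h
      | inr b =>
        rw [diag_sum, adj_sum_left_inr hr x hnm b]
        simp [zero_pow hk]
  -- 3 : signless Laplacian, left
  · intro x hx hnm
    obtain ⟨hx0, hxe⟩ := hx
    refine ⟨⟨?_, ?_⟩, nonmain_left (r-1) x hnm⟩
    · intro h
      apply hx0
      funext a
      simpa using congrFun h (Sum.inl a)
    · intro j
      simp only [signlessEntry, add_mul, Finset.sum_add_distrib]
      cases j with
      | inl a =>
        have h := hxe a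
        simp only [signlessEntry, add_mul, Finset.sum_add_distrib] at h
        rw [diag_sum] at h
        rw [diag_sum, adj_sum_left_inl hr hu₂ x a, deg_join_left]
        simp only [Sum.elim_inl]
        push_cast
        linear_combination h
      | inr b =>
        rw [diag_sum, adj_sum_left_inr hr x hnm b]
        simp [zero_pow hk]
  -- 4 : adjacency, right
  · intro z hz hnm
    obtain ⟨hz0, hze⟩ := hz
    refine ⟨⟨?_, ?_⟩, nonmain_right (r-1) z hnm⟩
    · intro h
      apply hz0
      funext b
      simpa using congrFun h (Sum.inr b)
    · intro j
      cases j with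
      | inl a =>
        rw [adj_sum_right_inl hr z hnm a]
        simp [zero_pow hk]
      | inr b =>
        rw [adj_sum_right_inr hr hu₁ z b]
        exact hze b
  -- 5 : Laplacian, right
  · intro z hz hnm
    obtain ⟨hz0, hze⟩ := hz
    refine ⟨⟨?_, ?_⟩, nonmain_right (r-1) z hnm⟩
    · intro h
      apply hz0
      funext b
      simpa using congrFun h (Sum.inr b)
    · intro j
      simp only [lapEntry, sub_mul, Finset.sum_sub_distrib]
      cases j with
      | inl a =>
        rw [diag_sum, adj_sum_right_inl hr z hnm a]
        simp [zero_pow hk]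
      | inr b =>
        have h := hze b
        simp only [lapEntry, sub_mul, Finset.sum_sub_distrib] at h
        rw [diag_sum] at h
        rw [diag_sum, adj_sum_right_inr hr hu₁ z b, deg_join_right]
        simp only [Sum.elim_inr]
        push_cast
        linear_combination h
  -- 6 : signless Laplacian, right
  · intro z hz hnm
    obtain ⟨hz0, hze⟩ := hz
    refine ⟨⟨?_, ?_⟩, nonmain_right (r-1) z hnm⟩
    · intro h
      apply hz0
      funext b
      simpa using congrFun h (Sum.inr b)
    · intro j
      simp only [signlessEntry, add_mul, Finset.sum_add_distrib]
      cases j with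
      | inl a =>
        rw [diag_sum, adj_sum_right_inl hr z hnm a]
        simp [zero_pow hk]
      | inr b =>
        have h := hze b
        simp only [signlessEntry, add_mul, Finset.sum_add_distrib] at h
        rw [diag_sum] at h
        rw [diag_sum, adj_sum_right_inr hr hu₁ z b, deg_join_right]
        simp only [Sum.elim_inr]
        push_cast
        linear_combination h
end

section
/- Let H1 be a d1-regular and H2 a d2-regular r-uniform hypergraph (r ≥ 2) on disjoint vertex sets V1, V2 of sizes n1 and n2, and let H = H1 ∨ H2 be their join. Suppose ε ∈ ℂ, ε ≠ 0, satisfies d1 + ∑_{t=1}^{r−1} binom(n2, t)·binom(n1−1, r−1−t)·ε^{−t} = d2 + ∑_{t=1}^{r−1} binom(n1, t)·binom(n2−1, r−1−t)·ε^{t}. Then the common value P = d1 + ∑_{t=1}^{r−1} binom(n2, t)·binom(n1−1, r−1−t)·ε^{−t} is an eigenvalue of the adjacency hypermatrix A(H), with eigenvector equal to ε on every vertex of V1 and to 1 on every vertex of V2. -/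
open Finset
open scoped Classical

lemma card_inj_image {V : Type*} [Fintype V] [DecidableEq V] (k : ℕ) (S : Finset V)
    (hS : S.card = k) :
    (Finset.univ.filter (fun f : Fin k → V =>
      Function.Injective f ∧ Finset.image f Finset.univ = S)).card = k.factorial := by
  rw [← Fintype.card_subtype]
  have e : {f : Fin k → V // Function.Injective f ∧ Finset.image f Finset.univ = S} ≃
      (Fin k ↪ {s // s ∈ S}) := by
    refine
      { toFun := fun f => ⟨fun i => ⟨f.1 i, by
          have := f.2.2 ▸ Finset.mem_image_of_mem f.1 (Finset.mem_univ i); exact this⟩,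
          fun a b h => f.2.1 (congrArg Subtype.val h)⟩
        invFun := fun g => ⟨fun i => (g i : V), ?_, ?_⟩
        left_inv := fun f => Subtype.ext rfl
        right_inv := fun g => by ext i; rfl }
    · exact fun a b h => g.injective (Subtype.ext h)
    · apply Finset.eq_of_subset_of_card_le
      · intro x hx
        obtain ⟨i, _, rfl⟩ := Finset.mem_image.mp hx
        exact (g i).2
      · rw [hS, Finset.card_image_of_injective _ (fun a b h => g.injective (Subtype.ext h))]
        simp
  rw [Fintype.card_congr e, Fintype.card_embedding_eq]
  simp [hS, Nat.descFactorial_self]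

lemma funsum {V : Type*} [Fintype V] [DecidableEq V] (k : ℕ) (E : Finset (Finset V)) (j : V)
    (x : V → ℂ) :
    ∑ f : Fin k → V,
      (if Function.Injective f ∧ (∀ i, f i ≠ j) ∧ insert j (Finset.image f Finset.univ) ∈ E then
        1 / (k.factorial : ℂ) else 0) * ∏ i, x (f i)
    = ∑ S ∈ (Finset.univ.powersetCard k).filter (fun S => j ∉ S ∧ insert j S ∈ E),
        ∏ i ∈ S, x i := by
  classical
  simp only [ite_mul, zero_mul]
  rw [← Finset.sum_filter (fun f : Fin k → V => Function.Injective f ∧ (∀ i, f i ≠ j) ∧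
      insert j (Finset.image f Finset.univ) ∈ E)
      (fun f => (1 / (k.factorial : ℂ)) * ∏ i, x (f i))]
  have hmaps : ∀ f ∈ Finset.univ.filter (fun f : Fin k → V => Function.Injective f ∧
      (∀ i, f i ≠ j) ∧ insert j (Finset.image f Finset.univ) ∈ E),
      Finset.image f Finset.univ ∈ (Finset.univ.powersetCard k).filter
        (fun S => j ∉ S ∧ insert j S ∈ E) := by
    intro f hf
    rw [Finset.mem_filter] at hf ⊢
    obtain ⟨-, hinj, hne, hE⟩ := hf
    refine ⟨Finset.mem_powersetCard.mpr ⟨Finset.subset_univ _, ?_⟩, ?_, hE⟩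
    · rw [Finset.card_image_of_injective _ hinj]; simp
    · simp only [Finset.mem_image]; rintro ⟨i, -, hi⟩; exact hne i hi
  rw [← Finset.sum_fiberwise_of_maps_to hmaps]
  refine Finset.sum_congr rfl fun S hS => ?_
  rw [Finset.mem_filter, Finset.mem_powersetCard] at hS
  obtain ⟨⟨-, hcard⟩, hjS, hE⟩ := hS
  have hfib : (Finset.univ.filter (fun f : Fin k → V => Function.Injective f ∧
        (∀ i, f i ≠ j) ∧ insert j (Finset.image f Finset.univ) ∈ E)).filter
        (fun f => Finset.image f Finset.univ = S)
      = Finset.univ.filter (fun f : Fin k → V =>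
          Function.Injective f ∧ Finset.image f Finset.univ = S) := by
    ext f
    simp only [Finset.mem_filter, Finset.mem_univ, true_and]
    constructor
    · rintro ⟨⟨hinj, -, -⟩, him⟩; exact ⟨hinj, him⟩
    · rintro ⟨hinj, him⟩
      refine ⟨⟨hinj, ?_, him ▸ hE⟩, him⟩
      intro i hi
      exact hjS (him ▸ hi ▸ Finset.mem_image_of_mem f (Finset.mem_univ i))
  rw [hfib]
  have hval : ∀ f ∈ Finset.univ.filter (fun f : Fin k → V =>
      Function.Injective f ∧ Finset.image f Finset.univ = S),
      (1 / (k.factorial : ℂ)) * ∏ i, x (f i) = (1 / (k.factorial : ℂ)) * ∏ i ∈ S, x i := by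
    intro f hf
    rw [Finset.mem_filter] at hf
    obtain ⟨-, hinj, him⟩ := hf
    rw [← him, Finset.prod_image (fun a _ b _ h => hinj h)]
  rw [Finset.sum_congr rfl hval, Finset.sum_const, card_inj_image k S hcard, nsmul_eq_mul]
  have : (k.factorial : ℂ) ≠ 0 := Nat.cast_ne_zero.mpr k.factorial_ne_zero
  field_simp

lemma masterM {α β : Type*} [Fintype α] [Fintype β] [DecidableEq α] [DecidableEq β]
    (L : Finset α) (R : Finset β) (k : ℕ) (w : ℂ) :
    ∑ S ∈ (Finset.univ.powersetCard k).filter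
        (fun S : Finset (α ⊕ β) => S.toLeft ⊆ L ∧ S.toRight ⊆ R), w ^ S.toLeft.card
    = ∑ t ∈ Finset.range (k+1), ((L.card.choose t * R.card.choose (k-t) : ℕ) : ℂ) * w ^ t := by
  classical
  have hmaps : ∀ S ∈ (Finset.univ.powersetCard k).filter
      (fun S : Finset (α ⊕ β) => S.toLeft ⊆ L ∧ S.toRight ⊆ R),
      S.toLeft.card ∈ Finset.range (k+1) := by
    intro S hS
    rw [Finset.mem_filter, Finset.mem_powersetCard] at hS
    rw [Finset.mem_range]
    have := Finset.card_toLeft_le (u := S)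
    omega
  rw [← Finset.sum_fiberwise_of_maps_to hmaps]
  refine Finset.sum_congr rfl fun t ht => ?_
  rw [Finset.mem_range] at ht
  have hcongr : ∀ S ∈ ((Finset.univ.powersetCard k).filter
      (fun S : Finset (α ⊕ β) => S.toLeft ⊆ L ∧ S.toRight ⊆ R)).filter
      (fun S => S.toLeft.card = t), w ^ S.toLeft.card = w ^ t := by
    intro S hS; rw [Finset.mem_filter] at hS; rw [hS.2]
  rw [Finset.sum_congr rfl hcongr, Finset.sum_const, nsmul_eq_mul]
  have hcard : (((Finset.univ.powersetCard k).filter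
      (fun S : Finset (α ⊕ β) => S.toLeft ⊆ L ∧ S.toRight ⊆ R)).filter
      (fun S => S.toLeft.card = t)).card
      = ((L.powersetCard t) ×ˢ (R.powersetCard (k-t))).card := by
    refine Finset.card_nbij' (fun S => (S.toLeft, S.toRight))
      (fun p => p.1.disjSum p.2) ?_ ?_ ?_ ?_
    · intro S hS
      simp only [Finset.mem_coe, Finset.mem_filter, Finset.mem_powersetCard] at hS
      obtain ⟨⟨⟨-, hk⟩, hL, hR⟩, ht'⟩ := hS
      have hsum := Finset.card_toLeft_add_card_toRight (u := S)
      rw [Finset.mem_coe, Finset.mem_product, Finset.mem_powersetCard, Finset.mem_powersetCard]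
      refine ⟨⟨hL, ht'⟩, hR, ?_⟩
      dsimp only
      omega
    · intro p hp
      rw [Finset.mem_coe, Finset.mem_product, Finset.mem_powersetCard, Finset.mem_powersetCard] at hp
      obtain ⟨⟨hA, hAc⟩, hB, hBc⟩ := hp
      simp only [Finset.mem_coe, Finset.mem_filter, Finset.mem_powersetCard, Finset.toLeft_disjSum,
        Finset.toRight_disjSum, Finset.card_disjSum]
      exact ⟨⟨⟨Finset.subset_univ _, by omega⟩, hA, hB⟩, hAc⟩
    · intro S _; exact Finset.toLeft_disjSum_toRight
    · intro p _; simp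
  rw [hcard, Finset.card_product, Finset.card_powersetCard, Finset.card_powersetCard]

lemma corRight {α β : Type*} [Fintype α] [Fintype β] [DecidableEq α] [DecidableEq β]
    (L : Finset α) (k : ℕ) (w : ℂ) :
    ∑ S ∈ (Finset.univ.powersetCard k).filter
        (fun S : Finset (α ⊕ β) => S.toLeft ⊆ L ∧ S.toRight.Nonempty), w ^ S.toLeft.card
    = ∑ u ∈ Finset.Icc 1 k,
        (((Fintype.card β).choose u * L.card.choose (k-u) : ℕ) : ℂ) * w ^ (k-u) := by
  classical
  have hsplit := Finset.sum_filter_add_sum_filter_not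
    ((Finset.univ.powersetCard k).filter
      (fun S : Finset (α ⊕ β) => S.toLeft ⊆ L ∧ S.toRight ⊆ (Finset.univ : Finset β)))
    (fun S => S.toRight = ∅) (fun S => w ^ S.toLeft.card)
  have h1 : ((Finset.univ.powersetCard k).filter
      (fun S : Finset (α ⊕ β) => S.toLeft ⊆ L ∧ S.toRight ⊆ (Finset.univ : Finset β))).filter
      (fun S => S.toRight = ∅)
      = (Finset.univ.powersetCard k).filter
      (fun S : Finset (α ⊕ β) => S.toLeft ⊆ L ∧ S.toRight ⊆ (∅ : Finset β)) := by
    ext S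
    simp only [Finset.mem_filter, Finset.subset_empty, Finset.subset_univ, and_true, true_and]
    tauto
  have h2 : ((Finset.univ.powersetCard k).filter
      (fun S : Finset (α ⊕ β) => S.toLeft ⊆ L ∧ S.toRight ⊆ (Finset.univ : Finset β))).filter
      (fun S => ¬ S.toRight = ∅)
      = (Finset.univ.powersetCard k).filter
      (fun S : Finset (α ⊕ β) => S.toLeft ⊆ L ∧ S.toRight.Nonempty) := by
    ext S
    simp only [Finset.mem_filter, Finset.subset_univ, and_true,
      Finset.nonempty_iff_ne_empty]
    tauto
  rw [h1, h2, masterM, masterM] at hsplit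
  have hzero : ∑ t ∈ Finset.range (k+1),
      ((L.card.choose t * (∅ : Finset β).card.choose (k-t) : ℕ) : ℂ) * w ^ t
      = ((L.card.choose k : ℕ) : ℂ) * w ^ k := by
    rw [Finset.sum_eq_single k]
    · simp
    · intro t ht hne
      rw [Finset.mem_range] at ht
      have : (0:ℕ).choose (k - t) = 0 := Nat.choose_eq_zero_of_lt (by omega)
      simp [this]
    · intro h; exact absurd (Finset.self_mem_range_succ k) h
  have hfull : ∑ t ∈ Finset.range (k+1),
      ((L.card.choose t * (Finset.univ : Finset β).card.choose (k-t) : ℕ) : ℂ) * w ^ t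
      = (∑ t ∈ Finset.range k,
        ((L.card.choose t * (Fintype.card β).choose (k-t) : ℕ) : ℂ) * w ^ t)
        + ((L.card.choose k : ℕ) : ℂ) * w ^ k := by
    rw [Finset.sum_range_succ]
    simp [Finset.card_univ]
  rw [hzero, hfull] at hsplit
  have hmain : ∑ S ∈ (Finset.univ.powersetCard k).filter
      (fun S : Finset (α ⊕ β) => S.toLeft ⊆ L ∧ S.toRight.Nonempty), w ^ S.toLeft.card
      = ∑ t ∈ Finset.range k,
        ((L.card.choose t * (Fintype.card β).choose (k-t) : ℕ) : ℂ) * w ^ t := by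
    linear_combination hsplit
  rw [hmain]
  refine Finset.sum_nbij' (fun t => k - t) (fun u => k - u) ?_ ?_ ?_ ?_ ?_
  · intro t ht; rw [Finset.mem_range] at ht; rw [Finset.mem_Icc]; omega
  · intro u hu; rw [Finset.mem_Icc] at hu; rw [Finset.mem_range]; omega
  · intro t ht; rw [Finset.mem_range] at ht; omega
  · intro u hu; rw [Finset.mem_Icc] at hu; omega
  · intro t ht
    rw [Finset.mem_range] at ht
    have h1 : k - (k - t) = t := by omega
    rw [h1, Nat.mul_comm]

lemma corLeft {α β : Type*} [Fintype α] [Fintype β] [DecidableEq α] [DecidableEq β]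
    (R : Finset β) (k : ℕ) (w : ℂ) :
    ∑ S ∈ (Finset.univ.powersetCard k).filter
        (fun S : Finset (α ⊕ β) => S.toLeft.Nonempty ∧ S.toRight ⊆ R), w ^ S.toLeft.card
    = ∑ t ∈ Finset.Icc 1 k,
        (((Fintype.card α).choose t * R.card.choose (k-t) : ℕ) : ℂ) * w ^ t := by
  classical
  have hsplit := Finset.sum_filter_add_sum_filter_not
    ((Finset.univ.powersetCard k).filter
      (fun S : Finset (α ⊕ β) => S.toLeft ⊆ (Finset.univ : Finset α) ∧ S.toRight ⊆ R))
    (fun S => S.toLeft = ∅) (fun S => w ^ S.toLeft.card)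
  have h1 : ((Finset.univ.powersetCard k).filter
      (fun S : Finset (α ⊕ β) => S.toLeft ⊆ (Finset.univ : Finset α) ∧ S.toRight ⊆ R)).filter
      (fun S => S.toLeft = ∅)
      = (Finset.univ.powersetCard k).filter
      (fun S : Finset (α ⊕ β) => S.toLeft ⊆ (∅ : Finset α) ∧ S.toRight ⊆ R) := by
    ext S
    simp only [Finset.mem_filter, Finset.subset_empty, Finset.subset_univ, true_and]
    tauto
  have h2 : ((Finset.univ.powersetCard k).filter
      (fun S : Finset (α ⊕ β) => S.toLeft ⊆ (Finset.univ : Finset α) ∧ S.toRight ⊆ R)).filter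
      (fun S => ¬ S.toLeft = ∅)
      = (Finset.univ.powersetCard k).filter
      (fun S : Finset (α ⊕ β) => S.toLeft.Nonempty ∧ S.toRight ⊆ R) := by
    ext S
    simp only [Finset.mem_filter, Finset.subset_univ, true_and,
      Finset.nonempty_iff_ne_empty]
    tauto
  rw [h1, h2, masterM, masterM] at hsplit
  have hzero : ∑ t ∈ Finset.range (k+1),
      (((∅ : Finset α).card.choose t * R.card.choose (k-t) : ℕ) : ℂ) * w ^ t
      = ((R.card.choose k : ℕ) : ℂ) := by
    rw [Finset.sum_eq_single 0]
    · simp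
    · intro t ht hne
      have : (0:ℕ).choose t = 0 := Nat.choose_eq_zero_of_lt (by omega)
      simp [this]
    · intro h; exact absurd (Finset.mem_range.mpr (by omega)) h
  have hIcc : Finset.range (k+1) = insert 0 (Finset.Icc 1 k) := by
    ext t; simp only [Finset.mem_range, Finset.mem_insert, Finset.mem_Icc]; omega
  have hfull : ∑ t ∈ Finset.range (k+1),
      (((Finset.univ : Finset α).card.choose t * R.card.choose (k-t) : ℕ) : ℂ) * w ^ t
      = ((R.card.choose k : ℕ) : ℂ) + ∑ t ∈ Finset.Icc 1 k,
        (((Fintype.card α).choose t * R.card.choose (k-t) : ℕ) : ℂ) * w ^ t := by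
    rw [hIcc, Finset.sum_insert (by simp)]
    simp [Finset.card_univ]
  rw [hzero, hfull] at hsplit
  linear_combination hsplit

lemma toLeft_map_inl {α β : Type*} [DecidableEq α] [DecidableEq β] (e : Finset α) :
    (e.map ⟨Sum.inl, Sum.inl_injective⟩ : Finset (α ⊕ β)).toLeft = e := by
  ext a; simp

lemma toRight_map_inl {α β : Type*} [DecidableEq α] [DecidableEq β] (e : Finset α) :
    (e.map ⟨Sum.inl, Sum.inl_injective⟩ : Finset (α ⊕ β)).toRight = ∅ := by
  ext b; simp

lemma toRight_map_inr {α β : Type*} [DecidableEq α] [DecidableEq β] (e : Finset β) :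
    (e.map ⟨Sum.inr, Sum.inr_injective⟩ : Finset (α ⊕ β)).toRight = e := by
  ext a; simp

lemma toLeft_map_inr {α β : Type*} [DecidableEq α] [DecidableEq β] (e : Finset β) :
    (e.map ⟨Sum.inr, Sum.inr_injective⟩ : Finset (α ⊕ β)).toLeft = ∅ := by
  ext b; simp

lemma prodx {n₁ n₂ : ℕ} (ε : ℂ) (S : Finset (Fin n₁ ⊕ Fin n₂)) :
    ∏ i ∈ S, (Sum.elim (fun _ => ε) fun _ => (1:ℂ)) i = ε ^ S.toLeft.card := by
  conv_lhs => rw [← Finset.toLeft_disjSum_toRight (u := S)]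
  rw [Finset.prod_disjSum]
  simp

lemma joinMem_inl (r n₁ n₂ : ℕ) (hr : 2 ≤ r) (E₁ : Finset (Finset (Fin n₁)))
    (E₂ : Finset (Finset (Fin n₂))) (v : Fin n₁) (S : Finset (Fin n₁ ⊕ Fin n₂))
    (hS : S.card = r - 1) (hv : Sum.inl v ∉ S) :
    insert (Sum.inl v) S ∈ joinEdges r n₁ n₂ E₁ E₂ ↔
      (insert (Sum.inl v) S ∈ E₁.image (fun e => e.map ⟨Sum.inl, Sum.inl_injective⟩)
        ∨ S.toRight.Nonempty) := by
  unfold joinEdges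
  rw [Finset.mem_union, Finset.mem_union]
  constructor
  · rintro ((h | h) | h)
    · exact Or.inl h
    · exfalso
      obtain ⟨e, he, heq⟩ := Finset.mem_image.mp h
      have hm : Sum.inl v ∈ e.map ⟨Sum.inr, Sum.inr_injective⟩ := heq ▸ Finset.mem_insert_self _ _
      obtain ⟨b, -, hb⟩ := Finset.mem_map.mp hm
      simp at hb
    · rw [Finset.mem_filter] at h
      obtain ⟨-, -, u, hu, hR⟩ := h
      rcases u with a | b
      · simp at hR
      · refine Or.inr ⟨b, Finset.mem_toRight.mpr ?_⟩
        rcases Finset.mem_insert.mp hu with h' | h'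
        · simp at h'
        · exact h'
  · rintro (h | ⟨b, hb⟩)
    · exact Or.inl (Or.inl h)
    · refine Or.inr (Finset.mem_filter.mpr ⟨?_, ⟨Sum.inl v, Finset.mem_insert_self _ _, rfl⟩,
        ⟨Sum.inr b, Finset.mem_insert_of_mem (Finset.mem_toRight.mp hb), rfl⟩⟩)
      rw [Finset.mem_powersetCard]
      refine ⟨Finset.subset_univ _, ?_⟩
      rw [Finset.card_insert_of_notMem hv, hS]
      omega

lemma joinMem_inr (r n₁ n₂ : ℕ) (hr : 2 ≤ r) (E₁ : Finset (Finset (Fin n₁)))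
    (E₂ : Finset (Finset (Fin n₂))) (w : Fin n₂) (S : Finset (Fin n₁ ⊕ Fin n₂))
    (hS : S.card = r - 1) (hw : Sum.inr w ∉ S) :
    insert (Sum.inr w) S ∈ joinEdges r n₁ n₂ E₁ E₂ ↔
      (insert (Sum.inr w) S ∈ E₂.image (fun e => e.map ⟨Sum.inr, Sum.inr_injective⟩)
        ∨ S.toLeft.Nonempty) := by
  unfold joinEdges
  rw [Finset.mem_union, Finset.mem_union]
  constructor
  · rintro ((h | h) | h)
    · exfalso
      obtain ⟨e, he, heq⟩ := Finset.mem_image.mp h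
      have hm : Sum.inr w ∈ e.map ⟨Sum.inl, Sum.inl_injective⟩ := heq ▸ Finset.mem_insert_self _ _
      obtain ⟨b, -, hb⟩ := Finset.mem_map.mp hm
      simp at hb
    · exact Or.inl h
    · rw [Finset.mem_filter] at h
      obtain ⟨-, ⟨u, hu, hL⟩, -⟩ := h
      rcases u with a | b
      · refine Or.inr ⟨a, Finset.mem_toLeft.mpr ?_⟩
        rcases Finset.mem_insert.mp hu with h' | h'
        · simp at h'
        · exact h'
      · simp at hL
  · rintro (h | ⟨a, ha⟩)
    · exact Or.inl (Or.inr h)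
    · refine Or.inr (Finset.mem_filter.mpr ⟨?_,
        ⟨Sum.inl a, Finset.mem_insert_of_mem (Finset.mem_toLeft.mp ha), rfl⟩,
        ⟨Sum.inr w, Finset.mem_insert_self _ _, rfl⟩⟩)
      rw [Finset.mem_powersetCard]
      refine ⟨Finset.subset_univ _, ?_⟩
      rw [Finset.card_insert_of_notMem hw, hS]
      omega

lemma cardT1_inl (r n₁ n₂ : ℕ) (E₁ : Finset (Finset (Fin n₁)))
    (hu₁ : ∀ e ∈ E₁, e.card = r) (v : Fin n₁) :
    ((Finset.univ.powersetCard (r-1)).filter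
      (fun S : Finset (Fin n₁ ⊕ Fin n₂) => Sum.inl v ∉ S ∧
        insert (Sum.inl v) S ∈ E₁.image (fun e => e.map ⟨Sum.inl, Sum.inl_injective⟩))).card
    = hdegree E₁ v := by
  unfold hdegree
  refine Finset.card_nbij' (fun S => (insert (Sum.inl v) S).toLeft)
    (fun e => (e.map ⟨Sum.inl, Sum.inl_injective⟩).erase (Sum.inl v)) ?_ ?_ ?_ ?_
  · intro S hS
    rw [Finset.mem_coe, Finset.mem_filter] at hS
    obtain ⟨hpc, hv, him⟩ := hS
    obtain ⟨e, he, heq⟩ := Finset.mem_image.mp him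
    dsimp only
    rw [← heq, toLeft_map_inl, Finset.mem_coe, Finset.mem_filter]
    refine ⟨he, ?_⟩
    have hm : Sum.inl v ∈ e.map ⟨Sum.inl, Sum.inl_injective⟩ := heq ▸ Finset.mem_insert_self _ _
    obtain ⟨a, ha, hav⟩ := Finset.mem_map.mp hm
    exact (Sum.inl_injective hav) ▸ ha
  · intro e he
    rw [Finset.mem_coe, Finset.mem_filter] at he
    obtain ⟨he, hv⟩ := he
    have hmem : Sum.inl v ∈ (e.map ⟨Sum.inl, Sum.inl_injective⟩ : Finset (Fin n₁ ⊕ Fin n₂)) :=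
      Finset.mem_map_of_mem _ hv
    rw [Finset.mem_coe, Finset.mem_filter]
    refine ⟨?_, Finset.notMem_erase _ _, ?_⟩
    · rw [Finset.mem_powersetCard]
      refine ⟨Finset.subset_univ _, ?_⟩
      rw [Finset.card_erase_of_mem hmem, Finset.card_map, hu₁ e he]
    · rw [Finset.insert_erase hmem]
      exact Finset.mem_image_of_mem _ he
  · intro S hS
    rw [Finset.mem_coe, Finset.mem_filter] at hS
    obtain ⟨hpc, hv, him⟩ := hS
    obtain ⟨e, he, heq⟩ := Finset.mem_image.mp him
    dsimp only
    rw [← heq, toLeft_map_inl, heq, Finset.erase_insert hv]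
  · intro e he
    rw [Finset.mem_coe, Finset.mem_filter] at he
    have hmem : Sum.inl v ∈ (e.map ⟨Sum.inl, Sum.inl_injective⟩ : Finset (Fin n₁ ⊕ Fin n₂)) :=
      Finset.mem_map_of_mem _ he.2
    dsimp only
    rw [Finset.insert_erase hmem, toLeft_map_inl]

lemma cardT1_inr (r n₁ n₂ : ℕ) (E₂ : Finset (Finset (Fin n₂)))
    (hu₂ : ∀ e ∈ E₂, e.card = r) (w : Fin n₂) :
    ((Finset.univ.powersetCard (r-1)).filter
      (fun S : Finset (Fin n₁ ⊕ Fin n₂) => Sum.inr w ∉ S ∧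
        insert (Sum.inr w) S ∈ E₂.image (fun e => e.map ⟨Sum.inr, Sum.inr_injective⟩))).card
    = hdegree E₂ w := by
  unfold hdegree
  refine Finset.card_nbij' (fun S => (insert (Sum.inr w) S).toRight)
    (fun e => (e.map ⟨Sum.inr, Sum.inr_injective⟩).erase (Sum.inr w)) ?_ ?_ ?_ ?_
  · intro S hS
    rw [Finset.mem_coe, Finset.mem_filter] at hS
    obtain ⟨hpc, hw, him⟩ := hS
    obtain ⟨e, he, heq⟩ := Finset.mem_image.mp him
    dsimp only
    rw [← heq, toRight_map_inr, Finset.mem_coe, Finset.mem_filter]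
    refine ⟨he, ?_⟩
    have hm : Sum.inr w ∈ e.map ⟨Sum.inr, Sum.inr_injective⟩ := heq ▸ Finset.mem_insert_self _ _
    obtain ⟨a, ha, hav⟩ := Finset.mem_map.mp hm
    exact (Sum.inr_injective hav) ▸ ha
  · intro e he
    rw [Finset.mem_coe, Finset.mem_filter] at he
    obtain ⟨he, hw⟩ := he
    have hmem : Sum.inr w ∈ (e.map ⟨Sum.inr, Sum.inr_injective⟩ : Finset (Fin n₁ ⊕ Fin n₂)) :=
      Finset.mem_map_of_mem _ hw
    rw [Finset.mem_coe, Finset.mem_filter]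
    refine ⟨?_, Finset.notMem_erase _ _, ?_⟩
    · rw [Finset.mem_powersetCard]
      refine ⟨Finset.subset_univ _, ?_⟩
      rw [Finset.card_erase_of_mem hmem, Finset.card_map, hu₂ e he]
    · rw [Finset.insert_erase hmem]
      exact Finset.mem_image_of_mem _ he
  · intro S hS
    rw [Finset.mem_coe, Finset.mem_filter] at hS
    obtain ⟨hpc, hw, him⟩ := hS
    obtain ⟨e, he, heq⟩ := Finset.mem_image.mp him
    dsimp only
    rw [← heq, toRight_map_inr, heq, Finset.erase_insert hw]
  · intro e he
    rw [Finset.mem_coe, Finset.mem_filter] at he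
    have hmem : Sum.inr w ∈ (e.map ⟨Sum.inr, Sum.inr_injective⟩ : Finset (Fin n₁ ⊕ Fin n₂)) :=
      Finset.mem_map_of_mem _ he.2
    dsimp only
    rw [Finset.insert_erase hmem, toRight_map_inr]

lemma caseInl (r n₁ n₂ : ℕ) (hr : 2 ≤ r) (E₁ : Finset (Finset (Fin n₁)))
    (E₂ : Finset (Finset (Fin n₂))) (hu₁ : ∀ e ∈ E₁, e.card = r) (ε : ℂ) (v : Fin n₁) :
    ∑ S ∈ (Finset.univ.powersetCard (r-1)).filter
        (fun S : Finset (Fin n₁ ⊕ Fin n₂) => Sum.inl v ∉ S ∧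
          insert (Sum.inl v) S ∈ joinEdges r n₁ n₂ E₁ E₂),
        ∏ i ∈ S, (Sum.elim (fun _ => ε) fun _ => (1:ℂ)) i
    = (hdegree E₁ v : ℂ) * ε ^ (r-1)
      + ∑ t ∈ Finset.Icc 1 (r-1),
          ((n₂.choose t * (n₁-1).choose (r-1-t) : ℕ) : ℂ) * ε ^ (r-1-t) := by
  classical
  have hvleft : ∀ S : Finset (Fin n₁ ⊕ Fin n₂),
      (S.toLeft ⊆ Finset.univ.erase v ↔ Sum.inl v ∉ S) := by
    intro S
    constructor
    · intro h hvS
      have hv2 := h (Finset.mem_toLeft.mpr hvS)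
      simp at hv2
    · intro h a ha
      refine Finset.mem_erase.mpr ⟨fun hav => h ?_, Finset.mem_univ a⟩
      exact hav ▸ Finset.mem_toLeft.mp ha
  have hT : (Finset.univ.powersetCard (r-1)).filter
        (fun S : Finset (Fin n₁ ⊕ Fin n₂) => Sum.inl v ∉ S ∧
          insert (Sum.inl v) S ∈ joinEdges r n₁ n₂ E₁ E₂)
      = ((Finset.univ.powersetCard (r-1)).filter
          (fun S : Finset (Fin n₁ ⊕ Fin n₂) => Sum.inl v ∉ S ∧
            insert (Sum.inl v) S ∈ E₁.image (fun e => e.map ⟨Sum.inl, Sum.inl_injective⟩)))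
        ∪ ((Finset.univ.powersetCard (r-1)).filter
          (fun S : Finset (Fin n₁ ⊕ Fin n₂) =>
            S.toLeft ⊆ Finset.univ.erase v ∧ S.toRight.Nonempty)) := by
    ext S
    simp only [Finset.mem_union, Finset.mem_filter]
    constructor
    · rintro ⟨hpc, hv, hE⟩
      have hcard := (Finset.mem_powersetCard.mp hpc).2
      rcases (joinMem_inl r n₁ n₂ hr E₁ E₂ v S hcard hv).mp hE with h | h
      · exact Or.inl ⟨hpc, hv, h⟩
      · exact Or.inr ⟨hpc, (hvleft S).mpr hv, h⟩
    · rintro (⟨hpc, hv, h⟩ | ⟨hpc, hsub, h⟩)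
      · have hcard := (Finset.mem_powersetCard.mp hpc).2
        exact ⟨hpc, hv, (joinMem_inl r n₁ n₂ hr E₁ E₂ v S hcard hv).mpr (Or.inl h)⟩
      · have hv := (hvleft S).mp hsub
        have hcard := (Finset.mem_powersetCard.mp hpc).2
        exact ⟨hpc, hv, (joinMem_inl r n₁ n₂ hr E₁ E₂ v S hcard hv).mpr (Or.inr h)⟩
  have hdisj : Disjoint
      ((Finset.univ.powersetCard (r-1)).filter
        (fun S : Finset (Fin n₁ ⊕ Fin n₂) => Sum.inl v ∉ S ∧
          insert (Sum.inl v) S ∈ E₁.image (fun e => e.map ⟨Sum.inl, Sum.inl_injective⟩)))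
      ((Finset.univ.powersetCard (r-1)).filter
        (fun S : Finset (Fin n₁ ⊕ Fin n₂) =>
          S.toLeft ⊆ Finset.univ.erase v ∧ S.toRight.Nonempty)) := by
    rw [Finset.disjoint_left]
    intro S h1 h2
    rw [Finset.mem_filter] at h1 h2
    obtain ⟨-, -, him⟩ := h1
    obtain ⟨-, -, b, hb⟩ := h2
    obtain ⟨e, -, heq⟩ := Finset.mem_image.mp him
    have : Sum.inr b ∈ (e.map ⟨Sum.inl, Sum.inl_injective⟩ : Finset (Fin n₁ ⊕ Fin n₂)) := by
      rw [heq]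
      exact Finset.mem_insert_of_mem (Finset.mem_toRight.mp hb)
    obtain ⟨a, -, ha⟩ := Finset.mem_map.mp this
    simp at ha
  rw [hT, Finset.sum_union hdisj]
  congr 1
  · have hconst : ∀ S ∈ (Finset.univ.powersetCard (r-1)).filter
        (fun S : Finset (Fin n₁ ⊕ Fin n₂) => Sum.inl v ∉ S ∧
          insert (Sum.inl v) S ∈ E₁.image (fun e => e.map ⟨Sum.inl, Sum.inl_injective⟩)),
        ∏ i ∈ S, (Sum.elim (fun _ => ε) fun _ => (1:ℂ)) i = ε ^ (r-1) := by
      intro S hS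
      rw [Finset.mem_filter] at hS
      obtain ⟨hpc, hv, him⟩ := hS
      obtain ⟨e, -, heq⟩ := Finset.mem_image.mp him
      have hR : S.toRight = ∅ := by
        rw [Finset.eq_empty_iff_forall_notMem]
        intro b hb
        have hmem : Sum.inr b ∈ (e.map ⟨Sum.inl, Sum.inl_injective⟩ :
            Finset (Fin n₁ ⊕ Fin n₂)) := by
          rw [heq]
          exact Finset.mem_insert_of_mem (Finset.mem_toRight.mp hb)
        obtain ⟨a, -, ha⟩ := Finset.mem_map.mp hmem
        simp at ha
      have hcards := Finset.card_toLeft_add_card_toRight (u := S)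
      have hScard := (Finset.mem_powersetCard.mp hpc).2
      rw [hR] at hcards
      simp only [Finset.card_empty, Nat.add_zero] at hcards
      rw [prodx, hcards, hScard]
    rw [Finset.sum_congr rfl hconst, Finset.sum_const, cardT1_inl r n₁ n₂ E₁ hu₁ v,
      nsmul_eq_mul]
  · have hcongr : ∀ S ∈ (Finset.univ.powersetCard (r-1)).filter
        (fun S : Finset (Fin n₁ ⊕ Fin n₂) =>
          S.toLeft ⊆ Finset.univ.erase v ∧ S.toRight.Nonempty),
        ∏ i ∈ S, (Sum.elim (fun _ => ε) fun _ => (1:ℂ)) i = ε ^ S.toLeft.card := by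
      intro S _; exact prodx ε S
    rw [Finset.sum_congr rfl hcongr, corRight (Finset.univ.erase v) (r-1) ε]
    have hLcard : (Finset.univ.erase v).card = n₁ - 1 := by
      rw [Finset.card_erase_of_mem (Finset.mem_univ v), Finset.card_univ, Fintype.card_fin]
    rw [hLcard]
    simp [Fintype.card_fin]

lemma caseInr (r n₁ n₂ : ℕ) (hr : 2 ≤ r) (E₁ : Finset (Finset (Fin n₁)))
    (E₂ : Finset (Finset (Fin n₂))) (hu₂ : ∀ e ∈ E₂, e.card = r) (ε : ℂ) (w : Fin n₂) :
    ∑ S ∈ (Finset.univ.powersetCard (r-1)).filter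
        (fun S : Finset (Fin n₁ ⊕ Fin n₂) => Sum.inr w ∉ S ∧
          insert (Sum.inr w) S ∈ joinEdges r n₁ n₂ E₁ E₂),
        ∏ i ∈ S, (Sum.elim (fun _ => ε) fun _ => (1:ℂ)) i
    = (hdegree E₂ w : ℂ)
      + ∑ t ∈ Finset.Icc 1 (r-1),
          ((n₁.choose t * (n₂-1).choose (r-1-t) : ℕ) : ℂ) * ε ^ t := by
  classical
  have hvright : ∀ S : Finset (Fin n₁ ⊕ Fin n₂),
      (S.toRight ⊆ Finset.univ.erase w ↔ Sum.inr w ∉ S) := by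
    intro S
    constructor
    · intro h hwS
      have hw2 := h (Finset.mem_toRight.mpr hwS)
      simp at hw2
    · intro h a ha
      refine Finset.mem_erase.mpr ⟨fun hav => h ?_, Finset.mem_univ a⟩
      exact hav ▸ Finset.mem_toRight.mp ha
  have hT : (Finset.univ.powersetCard (r-1)).filter
        (fun S : Finset (Fin n₁ ⊕ Fin n₂) => Sum.inr w ∉ S ∧
          insert (Sum.inr w) S ∈ joinEdges r n₁ n₂ E₁ E₂)
      = ((Finset.univ.powersetCard (r-1)).filter
          (fun S : Finset (Fin n₁ ⊕ Fin n₂) => Sum.inr w ∉ S ∧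
            insert (Sum.inr w) S ∈ E₂.image (fun e => e.map ⟨Sum.inr, Sum.inr_injective⟩)))
        ∪ ((Finset.univ.powersetCard (r-1)).filter
          (fun S : Finset (Fin n₁ ⊕ Fin n₂) =>
            S.toLeft.Nonempty ∧ S.toRight ⊆ Finset.univ.erase w)) := by
    ext S
    simp only [Finset.mem_union, Finset.mem_filter]
    constructor
    · rintro ⟨hpc, hw, hE⟩
      have hcard := (Finset.mem_powersetCard.mp hpc).2
      rcases (joinMem_inr r n₁ n₂ hr E₁ E₂ w S hcard hw).mp hE with h | h
      · exact Or.inl ⟨hpc, hw, h⟩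
      · exact Or.inr ⟨hpc, h, (hvright S).mpr hw⟩
    · rintro (⟨hpc, hw, h⟩ | ⟨hpc, h, hsub⟩)
      · have hcard := (Finset.mem_powersetCard.mp hpc).2
        exact ⟨hpc, hw, (joinMem_inr r n₁ n₂ hr E₁ E₂ w S hcard hw).mpr (Or.inl h)⟩
      · have hw := (hvright S).mp hsub
        have hcard := (Finset.mem_powersetCard.mp hpc).2
        exact ⟨hpc, hw, (joinMem_inr r n₁ n₂ hr E₁ E₂ w S hcard hw).mpr (Or.inr h)⟩
  have hdisj : Disjoint
      ((Finset.univ.powersetCard (r-1)).filter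
        (fun S : Finset (Fin n₁ ⊕ Fin n₂) => Sum.inr w ∉ S ∧
          insert (Sum.inr w) S ∈ E₂.image (fun e => e.map ⟨Sum.inr, Sum.inr_injective⟩)))
      ((Finset.univ.powersetCard (r-1)).filter
        (fun S : Finset (Fin n₁ ⊕ Fin n₂) =>
          S.toLeft.Nonempty ∧ S.toRight ⊆ Finset.univ.erase w)) := by
    rw [Finset.disjoint_left]
    intro S h1 h2
    rw [Finset.mem_filter] at h1 h2
    obtain ⟨-, -, him⟩ := h1
    obtain ⟨-, ⟨a, ha⟩, -⟩ := h2
    obtain ⟨e, -, heq⟩ := Finset.mem_image.mp him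
    have : Sum.inl a ∈ (e.map ⟨Sum.inr, Sum.inr_injective⟩ : Finset (Fin n₁ ⊕ Fin n₂)) := by
      rw [heq]
      exact Finset.mem_insert_of_mem (Finset.mem_toLeft.mp ha)
    obtain ⟨b, -, hb⟩ := Finset.mem_map.mp this
    simp at hb
  rw [hT, Finset.sum_union hdisj]
  congr 1
  · have hconst : ∀ S ∈ (Finset.univ.powersetCard (r-1)).filter
        (fun S : Finset (Fin n₁ ⊕ Fin n₂) => Sum.inr w ∉ S ∧
          insert (Sum.inr w) S ∈ E₂.image (fun e => e.map ⟨Sum.inr, Sum.inr_injective⟩)),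
        ∏ i ∈ S, (Sum.elim (fun _ => ε) fun _ => (1:ℂ)) i = 1 := by
      intro S hS
      rw [Finset.mem_filter] at hS
      obtain ⟨hpc, hw, him⟩ := hS
      obtain ⟨e, -, heq⟩ := Finset.mem_image.mp him
      have hL : S.toLeft = ∅ := by
        rw [Finset.eq_empty_iff_forall_notMem]
        intro a ha
        have hmem : Sum.inl a ∈ (e.map ⟨Sum.inr, Sum.inr_injective⟩ :
            Finset (Fin n₁ ⊕ Fin n₂)) := by
          rw [heq]
          exact Finset.mem_insert_of_mem (Finset.mem_toLeft.mp ha)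
        obtain ⟨b, -, hb⟩ := Finset.mem_map.mp hmem
        simp at hb
      rw [prodx, hL]
      simp
    rw [Finset.sum_congr rfl hconst, Finset.sum_const, cardT1_inr r n₁ n₂ E₂ hu₂ w,
      nsmul_eq_mul, mul_one]
  · have hcongr : ∀ S ∈ (Finset.univ.powersetCard (r-1)).filter
        (fun S : Finset (Fin n₁ ⊕ Fin n₂) =>
          S.toLeft.Nonempty ∧ S.toRight ⊆ Finset.univ.erase w),
        ∏ i ∈ S, (Sum.elim (fun _ => ε) fun _ => (1:ℂ)) i = ε ^ S.toLeft.card := by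
      intro S _; exact prodx ε S
    rw [Finset.sum_congr rfl hcongr, corLeft (Finset.univ.erase w) (r-1) ε]
    have hRcard : (Finset.univ.erase w).card = n₂ - 1 := by
      rw [Finset.card_erase_of_mem (Finset.mem_univ w), Finset.card_univ, Fintype.card_fin]
    rw [hRcard]
    simp [Fintype.card_fin]

/-- adjacency eigenvalue of the join of regular hypergraphs coming from the
vector which is `ε` on `V₁` and `1` on `V₂`. -/
theorem stmt5 (r n₁ n₂ : ℕ) (hr : 2 ≤ r) (hn₁ : 1 ≤ n₁) (hn₂ : 1 ≤ n₂)
    (E₁ : Finset (Finset (Fin n₁))) (E₂ : Finset (Finset (Fin n₂)))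
    (hu₁ : ∀ e ∈ E₁, e.card = r) (hu₂ : ∀ e ∈ E₂, e.card = r)
    (d₁ d₂ : ℕ) (hreg₁ : ∀ v, hdegree E₁ v = d₁) (hreg₂ : ∀ v, hdegree E₂ v = d₂)
    (ε : ℂ) (hε : ε ≠ 0)
    (heq : (d₁ : ℂ) + ∑ t ∈ Finset.Icc 1 (r - 1),
             ((n₂.choose t * (n₁ - 1).choose (r - 1 - t) : ℕ) : ℂ) * ε⁻¹ ^ t
         = (d₂ : ℂ) + ∑ t ∈ Finset.Icc 1 (r - 1),
             ((n₁.choose t * (n₂ - 1).choose (r - 1 - t) : ℕ) : ℂ) * ε ^ t) :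
    IsEigenpair r (adjEntry r (joinEdges r n₁ n₂ E₁ E₂))
      ((d₁ : ℂ) + ∑ t ∈ Finset.Icc 1 (r - 1),
        ((n₂.choose t * (n₁ - 1).choose (r - 1 - t) : ℕ) : ℂ) * ε⁻¹ ^ t)
      (Sum.elim (fun _ => ε) fun _ => 1) := by
  constructor
  · intro h
    have h0 := congrFun h (Sum.inr ⟨0, hn₂⟩)
    simp at h0
  · intro j
    simp only [adjEntry]
    rw [funsum (r-1) (joinEdges r n₁ n₂ E₁ E₂) j (Sum.elim (fun _ => ε) fun _ => (1:ℂ))]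
    cases j with
    | inl v =>
      rw [caseInl r n₁ n₂ hr E₁ E₂ hu₁ ε v, hreg₁ v]
      simp only [Sum.elim_inl]
      rw [add_mul, Finset.sum_mul]
      congr 1
      refine Finset.sum_congr rfl fun t ht => ?_
      rw [Finset.mem_Icc] at ht
      have hkey : ε⁻¹ ^ t * ε ^ (r-1) = ε ^ (r-1-t) := by
        rw [inv_pow, inv_mul_eq_iff_eq_mul₀ (pow_ne_zero t hε), ← pow_add]
        congr 1
        omega
      rw [mul_assoc, hkey]
    | inr w =>
      rw [caseInr r n₁ n₂ hr E₁ E₂ hu₂ ε w, hreg₂ w]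
      simp only [Sum.elim_inr, one_pow, mul_one]
      exact heq.symm
end

section
/- Let H1 be a d1-regular and H2 a d2-regular r-uniform hypergraph (r ≥ 2) on disjoint vertex sets V1, V2 of sizes n1 and n2, and let H = H1 ∨ H2 be their join. Suppose ε ∈ ℂ, ε ≠ 0, satisfies 2d1 + ∑_{t=1}^{r−1} binom(n2, t)·binom(n1−1, r−1−t)·(1 + ε^{−t}) = 2d2 + ∑_{t=1}^{r−1} binom(n1, t)·binom(n2−1, r−1−t)·(1 + ε^{t}). Then the common value Q = 2d1 + ∑_{t=1}^{r−1} binom(n2, t)·binom(n1−1, r−1−t)·(1 + ε^{−t}) is an eigenvalue of the signless Laplacian Q(H), with eigenvector equal to ε on every vertex of V1 and to 1 on every vertex of V2. -/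
open Finset
open scoped Classical

section Aux
open Finset

lemma count_subsets {γ : Type*} [Fintype γ] [DecidableEq γ] (p : γ → Prop) [DecidablePred p]
    (a : γ) (ha : ¬ p a) (k t : ℕ) (ht : t ≤ k - 1) (hk : 1 ≤ k) :
    (((Finset.univ : Finset γ).powersetCard k).filter
        (fun e => a ∈ e ∧ (e.filter p).card = t)).card
      = (Finset.univ.filter p).card.choose t *
        ((Finset.univ.filter fun v => ¬ p v).card - 1).choose (k - 1 - t) := by
  have ha' : a ∈ (Finset.univ.filter fun v => ¬ p v) := by simp [ha]
  have hcard : ((Finset.univ.filter fun v => ¬ p v).erase a).card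
      = (Finset.univ.filter fun v => ¬ p v).card - 1 := Finset.card_erase_of_mem ha'
  rw [← Finset.card_powersetCard t (Finset.univ.filter p), ← hcard,
      ← Finset.card_powersetCard (k - 1 - t) _, ← Finset.card_product]
  apply Finset.card_nbij' (fun e => (e.filter p, (e.filter (fun v => ¬ p v)).erase a))
      (fun P => insert a (P.1 ∪ P.2))
  · intro e he
    simp only [Finset.mem_coe, Finset.mem_filter, Finset.mem_powersetCard] at he
    obtain ⟨⟨_, hcr⟩, hae, hft⟩ := he
    simp only [Finset.mem_coe, Finset.mem_product, Finset.mem_powersetCard]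
    refine ⟨⟨Finset.filter_subset_filter _ (Finset.subset_univ e), hft⟩,
      ?_, ?_⟩
    · exact Finset.erase_subset_erase a (Finset.filter_subset_filter _ (Finset.subset_univ e))
    · have hae' : a ∈ e.filter (fun v => ¬ p v) := by simp [hae, ha]
      rw [Finset.card_erase_of_mem hae']
      have := Finset.card_filter_add_card_filter_not (s := e) (p := p)
      omega
  · intro P hP
    simp only [Finset.mem_coe, Finset.mem_product, Finset.mem_powersetCard] at hP
    obtain ⟨⟨hP1, hP1c⟩, hP2, hP2c⟩ := hP
    have haP1 : a ∉ P.1 := fun h => ha (Finset.mem_filter.mp (hP1 h)).2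
    have haP2 : a ∉ P.2 := fun h => (Finset.mem_erase.mp (hP2 h)).1 rfl
    have hdisj : Disjoint P.1 P.2 := by
      rw [Finset.disjoint_left]
      intro v h1 h2
      exact (Finset.mem_filter.mp (Finset.mem_of_mem_erase (hP2 h2))).2
        (Finset.mem_filter.mp (hP1 h1)).2
    simp only [Finset.mem_coe, Finset.mem_filter, Finset.mem_powersetCard]
    refine ⟨⟨Finset.subset_univ _, ?_⟩, Finset.mem_insert_self _ _, ?_⟩
    · rw [Finset.card_insert_of_notMem (by simp [haP1, haP2]),
        Finset.card_union_of_disjoint hdisj, hP1c, hP2c]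
      omega
    · rw [Finset.filter_insert, if_neg ha, Finset.filter_union]
      have h1 : P.1.filter p = P.1 := Finset.filter_true_of_mem
        (fun v hv => (Finset.mem_filter.mp (hP1 hv)).2)
      have h2 : P.2.filter p = ∅ := Finset.filter_false_of_mem
        (fun v hv => (Finset.mem_filter.mp (Finset.mem_of_mem_erase (hP2 hv))).2)
      rw [h1, h2, Finset.union_empty, hP1c]
  · intro e he
    simp only [Finset.mem_coe, Finset.mem_filter, Finset.mem_powersetCard] at he
    obtain ⟨⟨_, _⟩, hae, _⟩ := he
    ext v
    simp only [Finset.mem_insert, Finset.mem_union, Finset.mem_filter, Finset.mem_erase]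
    by_cases hv : v = a
    · subst hv; simp [hae]
    · simp only [hv, false_or]
      constructor
      · rintro (⟨h, _⟩ | ⟨_, h, _⟩) <;> exact h
      · intro hv'
        by_cases hpv : p v
        · exact Or.inl ⟨hv', hpv⟩
        · exact Or.inr ⟨hv, hv', hpv⟩
  · intro P hP
    simp only [Finset.mem_coe, Finset.mem_product, Finset.mem_powersetCard] at hP
    obtain ⟨⟨hP1, hP1c⟩, hP2, hP2c⟩ := hP
    have haP1 : a ∉ P.1 := fun h => ha (Finset.mem_filter.mp (hP1 h)).2
    have haP2 : a ∉ P.2 := fun h => (Finset.mem_erase.mp (hP2 h)).1 rfl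
    have h1 : P.1.filter p = P.1 := Finset.filter_true_of_mem
      (fun v hv => (Finset.mem_filter.mp (hP1 hv)).2)
    have h1' : P.1.filter (fun v => ¬ p v) = ∅ := Finset.filter_false_of_mem
      (fun v hv => not_not_intro (Finset.mem_filter.mp (hP1 hv)).2)
    have h2 : P.2.filter p = ∅ := Finset.filter_false_of_mem
      (fun v hv => (Finset.mem_filter.mp (Finset.mem_of_mem_erase (hP2 hv))).2)
    have h2' : P.2.filter (fun v => ¬ p v) = P.2 := Finset.filter_true_of_mem
      (fun v hv => (Finset.mem_filter.mp (Finset.mem_of_mem_erase (hP2 hv))).2)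
    have : insert a (P.1 ∪ P.2) = P.1 ∪ insert a P.2 := by
      ext v; simp only [Finset.mem_insert, Finset.mem_union]; tauto
    beta_reduce
    rw [this, Finset.filter_union, Finset.filter_union, h1, h1',
      Finset.filter_insert, Finset.filter_insert, if_neg ha, if_pos (not_not_intro ha |> fun _ => ha), h2, h2']
    · simp [Finset.union_empty, Finset.empty_union, Finset.erase_insert haP2]

lemma cross_sum_gen {γ : Type*} [Fintype γ] [DecidableEq γ] (p : γ → Prop) [DecidablePred p]
    (a : γ) (ha : ¬ p a) (r : ℕ) (hr : 1 ≤ r) (φ : ℕ → ℂ)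
    (s : Finset (Finset γ))
    (hs : ∀ e, e ∈ s ↔ (e.card = r ∧ a ∈ e ∧ (e.filter p).Nonempty)) :
    ∑ e ∈ s, φ ((e.filter p).card)
      = ∑ t ∈ Finset.Icc 1 (r - 1),
          (((Finset.univ.filter p).card.choose t *
            ((Finset.univ.filter fun v => ¬ p v).card - 1).choose (r - 1 - t) : ℕ) : ℂ) * φ t := by
  have hmaps : ∀ e ∈ s, (e.filter p).card ∈ Finset.Icc 1 (r - 1) := by
    intro e he
    rw [hs] at he
    obtain ⟨hcr, hae, hne⟩ := he
    rw [Finset.mem_Icc]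
    constructor
    · exact Finset.card_pos.mpr hne
    · have hsub : e.filter p ⊆ e.erase a := by
        intro v hv
        rw [Finset.mem_erase]
        refine ⟨fun h => ha (h ▸ (Finset.mem_filter.mp hv).2), (Finset.mem_filter.mp hv).1⟩
      calc (e.filter p).card ≤ (e.erase a).card := Finset.card_le_card hsub
        _ = r - 1 := by rw [Finset.card_erase_of_mem hae, hcr]
  rw [← Finset.sum_fiberwise_of_maps_to' hmaps φ]
  apply Finset.sum_congr rfl
  intro t htI
  rw [Finset.mem_Icc] at htI
  have hset : s.filter (fun e => (e.filter p).card = t)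
      = ((Finset.univ : Finset γ).powersetCard r).filter
          (fun e => a ∈ e ∧ (e.filter p).card = t) := by
    ext e
    simp only [Finset.mem_filter, Finset.mem_powersetCard, hs]
    constructor
    · rintro ⟨⟨hcr, hae, _⟩, hft⟩
      exact ⟨⟨Finset.subset_univ _, hcr⟩, hae, hft⟩
    · rintro ⟨⟨_, hcr⟩, hae, hft⟩
      refine ⟨⟨hcr, hae, ?_⟩, hft⟩
      rw [← Finset.card_pos, hft]; omega
  rw [Finset.sum_const, hset, count_subsets p a ha r t htI.2 hr, nsmul_eq_mul]

lemma card_inj_image_eq {V : Type*} [Fintype V] [DecidableEq V] (m : ℕ) (S : Finset V)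
    (hS : S.card = m) :
    ((Finset.univ : Finset (Fin m → V)).filter
      (fun f => Function.Injective f ∧ Finset.univ.image f = S)).card = m.factorial := by
  rw [← Fintype.card_subtype]
  have e : {f : Fin m → V // Function.Injective f ∧ Finset.univ.image f = S}
      ≃ (Fin m ↪ {v // v ∈ S}) := by
    refine ⟨fun f => ⟨fun i => ⟨f.1 i, ?_⟩, fun i i' h => f.2.1 (congrArg Subtype.val h)⟩,
      fun g => ⟨fun i => (g i : V), ?_, ?_⟩, fun f => rfl, fun g => by ext i; rfl⟩
    · have := Finset.mem_image_of_mem f.1 (Finset.mem_univ i)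
      rwa [f.2.2] at this
    · intro i i' h
      exact g.injective (Subtype.ext h)
    · have hinj : Function.Injective (fun i => (g i : V)) := fun i i' h =>
        g.injective (Subtype.ext h)
      apply Finset.eq_of_subset_of_card_le
      · intro v hv
        obtain ⟨i, _, rfl⟩ := Finset.mem_image.mp hv
        exact (g i).2
      · rw [Finset.card_image_of_injective _ hinj, Finset.card_univ, Fintype.card_fin, hS]
  rw [Fintype.card_congr e, Fintype.card_embedding_eq, Fintype.card_fin,
    Fintype.card_coe, hS, Nat.descFactorial_self]

lemma adj_sum {V : Type*} [Fintype V] [DecidableEq V] (r : ℕ)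
    (E : Finset (Finset V)) (hu : ∀ e ∈ E, e.card = r) (j : V) (x : V → ℂ) :
    ∑ f : Fin (r - 1) → V, adjEntry r E j f * ∏ i, x (f i)
      = ∑ e ∈ E.filter (fun e => j ∈ e), ∏ v ∈ e.erase j, x v := by
  classical
  set good : (Fin (r-1) → V) → Prop := fun f =>
    Function.Injective f ∧ (∀ i, f i ≠ j) ∧ insert j (Finset.image f Finset.univ) ∈ E with hgood
  have step1 : ∑ f : Fin (r - 1) → V, adjEntry r E j f * ∏ i, x (f i)
      = ∑ f ∈ Finset.univ.filter good, (1 / ((r-1).factorial : ℂ)) * ∏ i, x (f i) := by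
    rw [Finset.sum_filter]
    apply Finset.sum_congr rfl
    intro f _
    unfold adjEntry
    by_cases h : good f
    · rw [if_pos h, if_pos h]
    · rw [if_neg h, if_neg h, zero_mul]
  rw [step1]
  have hmaps : ∀ f ∈ Finset.univ.filter good,
      insert j (Finset.image f Finset.univ) ∈ E.filter (fun e => j ∈ e) := by
    intro f hf
    rw [Finset.mem_filter] at hf ⊢
    exact ⟨hf.2.2.2, Finset.mem_insert_self _ _⟩
  rw [← Finset.sum_fiberwise_of_maps_to hmaps]
  apply Finset.sum_congr rfl
  intro e he
  rw [Finset.mem_filter] at he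
  obtain ⟨heE, hje⟩ := he
  have hec : e.card = r := hu e heE
  have hfib : (Finset.univ.filter good).filter
      (fun f => insert j (Finset.image f Finset.univ) = e)
      = Finset.univ.filter (fun f : Fin (r-1) → V =>
          Function.Injective f ∧ Finset.univ.image f = e.erase j) := by
    ext f
    simp only [Finset.mem_filter, Finset.mem_univ, true_and, hgood]
    constructor
    · rintro ⟨⟨hinj, hne, _⟩, heq⟩
      refine ⟨hinj, ?_⟩
      rw [← heq, Finset.erase_insert]
      simp only [Finset.mem_image, Finset.mem_univ, true_and, not_exists]
      exact fun i => hne i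
    · rintro ⟨hinj, himg⟩
      have h1 : ∀ i, f i ≠ j := by
        intro i hi
        have : f i ∈ Finset.univ.image f := Finset.mem_image_of_mem _ (Finset.mem_univ i)
        rw [himg, hi] at this
        exact (Finset.mem_erase.mp this).1 rfl
      have h2 : insert j (Finset.univ.image f) = e := by rw [himg, Finset.insert_erase hje]
      exact ⟨⟨hinj, h1, h2 ▸ heE⟩, h2⟩
  rw [hfib]
  have hterm : ∀ f ∈ Finset.univ.filter (fun f : Fin (r-1) → V =>
      Function.Injective f ∧ Finset.univ.image f = e.erase j),
      (1 / ((r-1).factorial : ℂ)) * ∏ i, x (f i)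
        = (1 / ((r-1).factorial : ℂ)) * ∏ v ∈ e.erase j, x v := by
    intro f hf
    rw [Finset.mem_filter] at hf
    obtain ⟨_, hinj, himg⟩ := hf
    rw [← himg, Finset.prod_image (fun a _ b _ h => hinj h)]
  rw [Finset.sum_congr rfl hterm, Finset.sum_const,
    card_inj_image_eq (r-1) (e.erase j) (by rw [Finset.card_erase_of_mem hje, hec]),
    nsmul_eq_mul]
  have hfac : ((r-1).factorial : ℂ) ≠ 0 := Nat.cast_ne_zero.mpr (Nat.factorial_ne_zero _)
  field_simp

lemma d_sum {V : Type*} [Fintype V] [DecidableEq V] (m : ℕ) (j : V) (c : ℂ) (x : V → ℂ) :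
    ∑ f : Fin m → V, (if ∀ i, f i = j then c else 0) * ∏ i, x (f i)
      = c * x j ^ m := by
  rw [Finset.sum_eq_single_of_mem (fun _ => j) (Finset.mem_univ _)]
  · rw [if_pos (fun _ => rfl), Finset.prod_const, Finset.card_univ, Fintype.card_fin]
  · intro f _ hf
    rw [if_neg, zero_mul]
    intro h
    exact hf (funext h)

lemma prod_elim {n₁ n₂ : ℕ} (ε : ℂ) (S : Finset (Fin n₁ ⊕ Fin n₂)) :
    ∏ v ∈ S, Sum.elim (fun _ => ε) (fun _ => (1:ℂ)) v
      = ε ^ (S.filter (fun v => v.isLeft = true)).card := by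
  rw [← Finset.prod_filter_mul_prod_filter_not S (fun v => v.isLeft = true)]
  have h1 : ∏ v ∈ S.filter (fun v => v.isLeft = true),
      Sum.elim (fun _ => ε) (fun _ => (1:ℂ)) v = ε ^ (S.filter (fun v => v.isLeft = true)).card := by
    rw [← Finset.prod_const]
    apply Finset.prod_congr rfl
    intro v hv
    obtain ⟨_, hL⟩ := Finset.mem_filter.mp hv
    cases v with
    | inl a => rfl
    | inr b => simp at hL
  have h2 : ∏ v ∈ S.filter (fun v => ¬ v.isLeft = true),
      Sum.elim (fun _ => ε) (fun _ => (1:ℂ)) v = 1 := by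
    apply Finset.prod_eq_one
    intro v hv
    obtain ⟨_, hL⟩ := Finset.mem_filter.mp hv
    cases v with
    | inl a => simp at hL
    | inr b => rfl
  rw [h1, h2, mul_one]

lemma join_filter_left (r n₁ n₂ : ℕ) (E₁ : Finset (Finset (Fin n₁)))
    (E₂ : Finset (Finset (Fin n₂))) (a : Fin n₁) :
    (joinEdges r n₁ n₂ E₁ E₂).filter (fun e => Sum.inl a ∈ e)
      = (E₁.filter (fun e => a ∈ e)).image
          (fun e => e.map (⟨Sum.inl, Sum.inl_injective⟩ : Fin n₁ ↪ Fin n₁ ⊕ Fin n₂))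
        ∪ ((Finset.univ.powersetCard r).filter
            (fun e => (∃ v ∈ e, v.isLeft) ∧ (∃ v ∈ e, v.isRight))).filter
            (fun e => Sum.inl a ∈ e) := by
  unfold joinEdges
  rw [Finset.filter_union, Finset.filter_union]
  have hB : (E₂.image (fun e => e.map (⟨Sum.inr, Sum.inr_injective⟩ : Fin n₂ ↪ Fin n₁ ⊕ Fin n₂))).filter
      (fun e => Sum.inl a ∈ e) = ∅ := by
    rw [Finset.filter_eq_empty_iff]
    intro e he
    obtain ⟨e₀, _, rfl⟩ := Finset.mem_image.mp he
    simp [Finset.mem_map]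
  have hA : (E₁.image (fun e => e.map (⟨Sum.inl, Sum.inl_injective⟩ : Fin n₁ ↪ Fin n₁ ⊕ Fin n₂))).filter
      (fun e => Sum.inl a ∈ e)
      = (E₁.filter (fun e => a ∈ e)).image
          (fun e => e.map (⟨Sum.inl, Sum.inl_injective⟩ : Fin n₁ ↪ Fin n₁ ⊕ Fin n₂)) := by
    ext e
    simp only [Finset.mem_filter, Finset.mem_image, Finset.mem_map,
      Function.Embedding.coeFn_mk]
    constructor
    · rintro ⟨⟨e₀, he₀, rfl⟩, hmem⟩
      refine ⟨e₀, ⟨he₀, ?_⟩, rfl⟩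
      obtain ⟨v, hv, hveq⟩ := Finset.mem_map.mp hmem
      obtain rfl : v = a := Sum.inl_injective hveq
      exact hv
    · rintro ⟨e₀, ⟨he₀, ha₀⟩, rfl⟩
      exact ⟨⟨e₀, he₀, rfl⟩, Finset.mem_map_of_mem _ ha₀⟩
  rw [hA, hB, Finset.union_empty]

lemma join_filter_right (r n₁ n₂ : ℕ) (E₁ : Finset (Finset (Fin n₁)))
    (E₂ : Finset (Finset (Fin n₂))) (b : Fin n₂) :
    (joinEdges r n₁ n₂ E₁ E₂).filter (fun e => Sum.inr b ∈ e)
      = (E₂.filter (fun e => b ∈ e)).image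
          (fun e => e.map (⟨Sum.inr, Sum.inr_injective⟩ : Fin n₂ ↪ Fin n₁ ⊕ Fin n₂))
        ∪ ((Finset.univ.powersetCard r).filter
            (fun e => (∃ v ∈ e, v.isLeft) ∧ (∃ v ∈ e, v.isRight))).filter
            (fun e => Sum.inr b ∈ e) := by
  unfold joinEdges
  rw [Finset.filter_union, Finset.filter_union]
  have hB : (E₁.image (fun e => e.map (⟨Sum.inl, Sum.inl_injective⟩ : Fin n₁ ↪ Fin n₁ ⊕ Fin n₂))).filter
      (fun e => Sum.inr b ∈ e) = ∅ := by
    rw [Finset.filter_eq_empty_iff]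
    intro e he
    obtain ⟨e₀, _, rfl⟩ := Finset.mem_image.mp he
    simp [Finset.mem_map]
  have hA : (E₂.image (fun e => e.map (⟨Sum.inr, Sum.inr_injective⟩ : Fin n₂ ↪ Fin n₁ ⊕ Fin n₂))).filter
      (fun e => Sum.inr b ∈ e)
      = (E₂.filter (fun e => b ∈ e)).image
          (fun e => e.map (⟨Sum.inr, Sum.inr_injective⟩ : Fin n₂ ↪ Fin n₁ ⊕ Fin n₂)) := by
    ext e
    simp only [Finset.mem_filter, Finset.mem_image, Finset.mem_map,
      Function.Embedding.coeFn_mk]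
    constructor
    · rintro ⟨⟨e₀, he₀, rfl⟩, hmem⟩
      refine ⟨e₀, ⟨he₀, ?_⟩, rfl⟩
      obtain ⟨v, hv, hveq⟩ := Finset.mem_map.mp hmem
      obtain rfl : v = b := Sum.inr_injective hveq
      exact hv
    · rintro ⟨e₀, ⟨he₀, hb₀⟩, rfl⟩
      exact ⟨⟨e₀, he₀, rfl⟩, Finset.mem_map_of_mem _ hb₀⟩
  rw [hB, hA, Finset.empty_union]

lemma disj_left (r n₁ n₂ : ℕ) (E₁ : Finset (Finset (Fin n₁))) (a : Fin n₁) :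
    Disjoint ((E₁.filter (fun e => a ∈ e)).image
        (fun e : Finset (Fin n₁) =>
          (e.map (⟨Sum.inl, Sum.inl_injective⟩ : Fin n₁ ↪ Fin n₁ ⊕ Fin n₂) :
            Finset (Fin n₁ ⊕ Fin n₂))))
      ((((Finset.univ : Finset (Fin n₁ ⊕ Fin n₂)).powersetCard r).filter
            (fun e => (∃ v ∈ e, v.isLeft) ∧ (∃ v ∈ e, v.isRight))).filter
            (fun e => Sum.inl a ∈ e)) := by
  rw [Finset.disjoint_left]
  intro e he he'
  obtain ⟨e₀, _, rfl⟩ := Finset.mem_image.mp he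
  obtain ⟨h1, _⟩ := Finset.mem_filter.mp he'
  obtain ⟨_, _, hR⟩ := Finset.mem_filter.mp h1
  obtain ⟨v, hv, hvR⟩ := hR
  obtain ⟨w, _, rfl⟩ := Finset.mem_map.mp hv
  simp at hvR

lemma disj_right (r n₁ n₂ : ℕ) (E₂ : Finset (Finset (Fin n₂))) (b : Fin n₂) :
    Disjoint ((E₂.filter (fun e => b ∈ e)).image
        (fun e : Finset (Fin n₂) =>
          (e.map (⟨Sum.inr, Sum.inr_injective⟩ : Fin n₂ ↪ Fin n₁ ⊕ Fin n₂) :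
            Finset (Fin n₁ ⊕ Fin n₂))))
      ((((Finset.univ : Finset (Fin n₁ ⊕ Fin n₂)).powersetCard r).filter
            (fun e => (∃ v ∈ e, v.isLeft) ∧ (∃ v ∈ e, v.isRight))).filter
            (fun e => Sum.inr b ∈ e)) := by
  rw [Finset.disjoint_left]
  intro e he he'
  obtain ⟨e₀, _, rfl⟩ := Finset.mem_image.mp he
  obtain ⟨h1, _⟩ := Finset.mem_filter.mp he'
  obtain ⟨_, hL, _⟩ := Finset.mem_filter.mp h1
  obtain ⟨v, hv, hvL⟩ := hL
  obtain ⟨w, _, rfl⟩ := Finset.mem_map.mp hv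
  simp at hvL

end Aux

/-- signless Laplacian eigenvalue of the join of regular hypergraphs coming
from the vector which is `ε` on `V₁` and `1` on `V₂`. -/
theorem stmt6 (r n₁ n₂ : ℕ) (hr : 2 ≤ r) (hn₁ : 1 ≤ n₁) (hn₂ : 1 ≤ n₂)
    (E₁ : Finset (Finset (Fin n₁))) (E₂ : Finset (Finset (Fin n₂)))
    (hu₁ : ∀ e ∈ E₁, e.card = r) (hu₂ : ∀ e ∈ E₂, e.card = r)
    (d₁ d₂ : ℕ) (hreg₁ : ∀ v, hdegree E₁ v = d₁) (hreg₂ : ∀ v, hdegree E₂ v = d₂)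
    (ε : ℂ) (hε : ε ≠ 0)
    (heq : 2 * (d₁ : ℂ) + ∑ t ∈ Finset.Icc 1 (r - 1),
             ((n₂.choose t * (n₁ - 1).choose (r - 1 - t) : ℕ) : ℂ) * (1 + ε⁻¹ ^ t)
         = 2 * (d₂ : ℂ) + ∑ t ∈ Finset.Icc 1 (r - 1),
             ((n₁.choose t * (n₂ - 1).choose (r - 1 - t) : ℕ) : ℂ) * (1 + ε ^ t)) :
    IsEigenpair r (signlessEntry r (joinEdges r n₁ n₂ E₁ E₂))
      (2 * (d₁ : ℂ) + ∑ t ∈ Finset.Icc 1 (r - 1),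
        ((n₂.choose t * (n₁ - 1).choose (r - 1 - t) : ℕ) : ℂ) * (1 + ε⁻¹ ^ t))
      (Sum.elim (fun _ => ε) fun _ => 1) := by
  classical
  set J := joinEdges r n₁ n₂ E₁ E₂ with hJ
  set x : Fin n₁ ⊕ Fin n₂ → ℂ := Sum.elim (fun _ => ε) (fun _ => 1) with hxdef
  have hr1 : 1 ≤ r := le_trans (by norm_num) hr
  have hJu : ∀ e ∈ J, e.card = r := by
    intro e he
    rw [hJ] at he
    unfold joinEdges at he
    rcases Finset.mem_union.mp he with h | h
    · rcases Finset.mem_union.mp h with h | h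
      · obtain ⟨e₀, he₀, rfl⟩ := Finset.mem_image.mp h
        rw [Finset.card_map]; exact hu₁ e₀ he₀
      · obtain ⟨e₀, he₀, rfl⟩ := Finset.mem_image.mp h
        rw [Finset.card_map]; exact hu₂ e₀ he₀
    · exact (Finset.mem_powersetCard.mp (Finset.mem_filter.mp h).1).2
  have hRcard : ((Finset.univ : Finset (Fin n₁ ⊕ Fin n₂)).filter
      (fun v => v.isRight = true)).card = n₂ := by
    have h : ((Finset.univ : Finset (Fin n₁ ⊕ Fin n₂)).filter (fun v => v.isRight = true))
        = Finset.univ.map ⟨Sum.inr, Sum.inr_injective⟩ := by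
      ext v; cases v <;> simp
    rw [h, Finset.card_map, Finset.card_univ, Fintype.card_fin]
  have hRcard' : ((Finset.univ : Finset (Fin n₁ ⊕ Fin n₂)).filter
      (fun v => ¬ v.isRight = true)).card = n₁ := by
    have h : ((Finset.univ : Finset (Fin n₁ ⊕ Fin n₂)).filter (fun v => ¬ v.isRight = true))
        = Finset.univ.map ⟨Sum.inl, Sum.inl_injective⟩ := by
      ext v; cases v <;> simp
    rw [h, Finset.card_map, Finset.card_univ, Fintype.card_fin]
  have hLcard : ((Finset.univ : Finset (Fin n₁ ⊕ Fin n₂)).filter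
      (fun v => v.isLeft = true)).card = n₁ := by
    have h : ((Finset.univ : Finset (Fin n₁ ⊕ Fin n₂)).filter (fun v => v.isLeft = true))
        = Finset.univ.map ⟨Sum.inl, Sum.inl_injective⟩ := by
      ext v; cases v <;> simp
    rw [h, Finset.card_map, Finset.card_univ, Fintype.card_fin]
  have hLcard' : ((Finset.univ : Finset (Fin n₁ ⊕ Fin n₂)).filter
      (fun v => ¬ v.isLeft = true)).card = n₂ := by
    have h : ((Finset.univ : Finset (Fin n₁ ⊕ Fin n₂)).filter (fun v => ¬ v.isLeft = true))
        = Finset.univ.map ⟨Sum.inr, Sum.inr_injective⟩ := by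
      ext v; cases v <;> simp
    rw [h, Finset.card_map, Finset.card_univ, Fintype.card_fin]
  constructor
  · intro h
    apply hε
    have h0 := congrFun h (Sum.inl ⟨0, hn₁⟩)
    simpa [hxdef] using h0
  intro j
  have hsplit : ∑ f : Fin (r-1) → (Fin n₁ ⊕ Fin n₂), signlessEntry r J j f * ∏ i, x (f i)
      = (hdegree J j : ℂ) * x j ^ (r-1)
        + ∑ e ∈ J.filter (fun e => j ∈ e), ∏ v ∈ e.erase j, x v := by
    have hterm : ∀ f : Fin (r-1) → (Fin n₁ ⊕ Fin n₂),
        signlessEntry r J j f * ∏ i, x (f i)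
          = (if ∀ i, f i = j then (hdegree J j : ℂ) else 0) * ∏ i, x (f i)
            + adjEntry r J j f * ∏ i, x (f i) := by
      intro f; unfold signlessEntry; ring
    rw [Finset.sum_congr rfl (fun f _ => hterm f), Finset.sum_add_distrib,
      d_sum, adj_sum r J hJu j x]
  rw [hsplit]
  cases j with
  | inl a =>
    have hs : ∀ e : Finset (Fin n₁ ⊕ Fin n₂),
        e ∈ ((Finset.univ.powersetCard r).filter
            (fun e => (∃ v ∈ e, v.isLeft) ∧ (∃ v ∈ e, v.isRight))).filter
            (fun e => Sum.inl a ∈ e)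
          ↔ (e.card = r ∧ Sum.inl a ∈ e ∧
              (e.filter (fun v => v.isRight = true)).Nonempty) := by
      intro e
      simp only [Finset.mem_filter, Finset.mem_powersetCard]
      constructor
      · rintro ⟨⟨⟨_, hcr⟩, _, hR⟩, hae⟩
        obtain ⟨v, hv, hvR⟩ := hR
        exact ⟨hcr, hae, ⟨v, Finset.mem_filter.mpr ⟨hv, hvR⟩⟩⟩
      · rintro ⟨hcr, hae, ⟨v, hv⟩⟩
        obtain ⟨hve, hvR⟩ := Finset.mem_filter.mp hv
        exact ⟨⟨⟨Finset.subset_univ _, hcr⟩, ⟨Sum.inl a, hae, rfl⟩, ⟨v, hve, hvR⟩⟩, hae⟩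
    have hA : ∑ e ∈ (E₁.filter (fun e => a ∈ e)).image
          (fun e => e.map (⟨Sum.inl, Sum.inl_injective⟩ : Fin n₁ ↪ Fin n₁ ⊕ Fin n₂)),
          ∏ v ∈ e.erase (Sum.inl a), x v = (d₁ : ℂ) * ε ^ (r-1) := by
      rw [Finset.sum_image (fun e₁ _ e₂ _ h => Finset.map_injective _ h)]
      have hprod : ∀ e₀ ∈ E₁.filter (fun e => a ∈ e),
          ∏ v ∈ ((e₀.map (⟨Sum.inl, Sum.inl_injective⟩ : Fin n₁ ↪ Fin n₁ ⊕ Fin n₂)).erase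
            (Sum.inl a)), x v = ε ^ (r-1) := by
        intro e₀ he₀
        obtain ⟨he₀E, hae₀⟩ := Finset.mem_filter.mp he₀
        rw [show (Sum.inl a : Fin n₁ ⊕ Fin n₂)
            = (⟨Sum.inl, Sum.inl_injective⟩ : Fin n₁ ↪ Fin n₁ ⊕ Fin n₂) a from rfl,
          ← Finset.map_erase, Finset.prod_map]
        calc ∏ w ∈ e₀.erase a,
              x ((⟨Sum.inl, Sum.inl_injective⟩ : Fin n₁ ↪ Fin n₁ ⊕ Fin n₂) w)
            = ∏ w ∈ e₀.erase a, ε := Finset.prod_congr rfl (fun w _ => rfl)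
          _ = ε ^ (e₀.erase a).card := Finset.prod_const ε
          _ = ε ^ (r-1) := by rw [Finset.card_erase_of_mem hae₀, hu₁ e₀ he₀E]
      rw [Finset.sum_congr rfl hprod, Finset.sum_const, nsmul_eq_mul]
      congr 1
      rw [← hreg₁ a]
      rfl
    have hCs : ∀ e ∈ ((Finset.univ.powersetCard r).filter
            (fun e => (∃ v ∈ e, v.isLeft) ∧ (∃ v ∈ e, v.isRight))).filter
            (fun e => Sum.inl a ∈ e),
        ∏ v ∈ e.erase (Sum.inl a), x v
          = (fun t => ε ^ (r - 1 - t)) ((e.filter (fun v => v.isRight = true)).card) := by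
      intro e he
      obtain ⟨hcr, hae, _⟩ := (hs e).mp he
      rw [hxdef, prod_elim]
      simp only
      congr 1
      rw [Finset.filter_erase]
      have haL : Sum.inl a ∈ e.filter (fun v => v.isLeft = true) :=
        Finset.mem_filter.mpr ⟨hae, rfl⟩
      rw [Finset.card_erase_of_mem haL]
      have hsum := Finset.card_filter_add_card_filter_not
        (s := e) (p := fun v => v.isRight = true)
      have hfe : e.filter (fun v => ¬ v.isRight = true)
          = e.filter (fun v => v.isLeft = true) := by
        apply Finset.filter_congr; intro v _; cases v <;> simp
      rw [hfe, hcr] at hsum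
      have hLpos : 1 ≤ (e.filter (fun v => v.isLeft = true)).card :=
        Finset.card_pos.mpr ⟨_, haL⟩
      omega
    have hC : ∑ e ∈ ((Finset.univ.powersetCard r).filter
            (fun e => (∃ v ∈ e, v.isLeft) ∧ (∃ v ∈ e, v.isRight))).filter
            (fun e => Sum.inl a ∈ e),
          ∏ v ∈ e.erase (Sum.inl a), x v
        = ∑ t ∈ Finset.Icc 1 (r-1),
            ((n₂.choose t * (n₁-1).choose (r-1-t) : ℕ) : ℂ) * ε ^ (r-1-t) := by
      rw [Finset.sum_congr rfl hCs,
        cross_sum_gen (fun v => v.isRight = true) (Sum.inl a) (by simp) r hr1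
          (fun t => ε ^ (r-1-t)) _ hs]
      simp only [hRcard, hRcard']
    have hdeg : (hdegree J (Sum.inl a) : ℂ)
        = (d₁ : ℂ) + ∑ t ∈ Finset.Icc 1 (r-1),
            ((n₂.choose t * (n₁-1).choose (r-1-t) : ℕ) : ℂ) := by
      unfold hdegree
      rw [hJ, join_filter_left,
        Finset.card_union_of_disjoint (disj_left r n₁ n₂ E₁ a),
        Finset.card_image_of_injective _ (Finset.map_injective _), Nat.cast_add]
      congr 1
      · rw [← hreg₁ a]
        rfl
      · rw [Finset.card_eq_sum_ones, Nat.cast_sum]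
        push_cast
        rw [cross_sum_gen (fun v => v.isRight = true) (Sum.inl a) (by simp) r hr1
            (fun _ => (1:ℂ)) _ hs]
        simp [hRcard, hRcard', hLcard, hLcard']
    rw [hJ, join_filter_left, Finset.sum_union (disj_left r n₁ n₂ E₁ a), hA, hC, ← hJ, hdeg]
    have hxa : x (Sum.inl a) = ε := rfl
    rw [hxa]
    have htpow : ∀ t ∈ Finset.Icc 1 (r-1),
        ((n₂.choose t * (n₁-1).choose (r-1-t) : ℕ) : ℂ) * ε ^ (r-1-t)
          = ((n₂.choose t * (n₁-1).choose (r-1-t) : ℕ) : ℂ) * ε⁻¹ ^ t * ε ^ (r-1) := by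
      intro t ht
      rw [Finset.mem_Icc] at ht
      have h2 : ε ^ t ≠ 0 := pow_ne_zero _ hε
      have h3 : ε ^ (r-1-t) = ε ^ (r-1) / ε ^ t := by
        rw [eq_div_iff h2, ← pow_add]
        congr 1
        omega
      rw [h3, inv_pow]
      field_simp
    rw [Finset.sum_congr rfl htpow]
    simp only [mul_add, mul_one, Finset.sum_add_distrib, ← Finset.sum_mul]
    ring
  | inr b =>
    have hs : ∀ e : Finset (Fin n₁ ⊕ Fin n₂),
        e ∈ ((Finset.univ.powersetCard r).filter
            (fun e => (∃ v ∈ e, v.isLeft) ∧ (∃ v ∈ e, v.isRight))).filter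
            (fun e => Sum.inr b ∈ e)
          ↔ (e.card = r ∧ Sum.inr b ∈ e ∧
              (e.filter (fun v => v.isLeft = true)).Nonempty) := by
      intro e
      simp only [Finset.mem_filter, Finset.mem_powersetCard]
      constructor
      · rintro ⟨⟨⟨_, hcr⟩, hL, _⟩, hbe⟩
        obtain ⟨v, hv, hvL⟩ := hL
        exact ⟨hcr, hbe, ⟨v, Finset.mem_filter.mpr ⟨hv, hvL⟩⟩⟩
      · rintro ⟨hcr, hbe, ⟨v, hv⟩⟩
        obtain ⟨hve, hvL⟩ := Finset.mem_filter.mp hv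
        exact ⟨⟨⟨Finset.subset_univ _, hcr⟩, ⟨v, hve, hvL⟩, ⟨Sum.inr b, hbe, rfl⟩⟩, hbe⟩
    have hA : ∑ e ∈ (E₂.filter (fun e => b ∈ e)).image
          (fun e => e.map (⟨Sum.inr, Sum.inr_injective⟩ : Fin n₂ ↪ Fin n₁ ⊕ Fin n₂)),
          ∏ v ∈ e.erase (Sum.inr b), x v = (d₂ : ℂ) := by
      rw [Finset.sum_image (fun e₁ _ e₂ _ h => Finset.map_injective _ h)]
      have hprod : ∀ e₀ ∈ E₂.filter (fun e => b ∈ e),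
          ∏ v ∈ ((e₀.map (⟨Sum.inr, Sum.inr_injective⟩ : Fin n₂ ↪ Fin n₁ ⊕ Fin n₂)).erase
            (Sum.inr b)), x v = 1 := by
        intro e₀ he₀
        rw [show (Sum.inr b : Fin n₁ ⊕ Fin n₂)
            = (⟨Sum.inr, Sum.inr_injective⟩ : Fin n₂ ↪ Fin n₁ ⊕ Fin n₂) b from rfl,
          ← Finset.map_erase, Finset.prod_map]
        exact Finset.prod_eq_one (fun w _ => rfl)
      rw [Finset.sum_congr rfl hprod, Finset.sum_const, nsmul_eq_mul, mul_one]
      congr 1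
      rw [← hreg₂ b]
      rfl
    have hCs : ∀ e ∈ ((Finset.univ.powersetCard r).filter
            (fun e => (∃ v ∈ e, v.isLeft) ∧ (∃ v ∈ e, v.isRight))).filter
            (fun e => Sum.inr b ∈ e),
        ∏ v ∈ e.erase (Sum.inr b), x v
          = (fun t => ε ^ t) ((e.filter (fun v => v.isLeft = true)).card) := by
      intro e he
      rw [hxdef, prod_elim]
      simp only
      congr 1
      rw [Finset.filter_erase, Finset.erase_eq_of_notMem]
      intro hmem
      have := (Finset.mem_filter.mp hmem).2
      simp at this
    have hC : ∑ e ∈ ((Finset.univ.powersetCard r).filter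
            (fun e => (∃ v ∈ e, v.isLeft) ∧ (∃ v ∈ e, v.isRight))).filter
            (fun e => Sum.inr b ∈ e),
          ∏ v ∈ e.erase (Sum.inr b), x v
        = ∑ t ∈ Finset.Icc 1 (r-1),
            ((n₁.choose t * (n₂-1).choose (r-1-t) : ℕ) : ℂ) * ε ^ t := by
      rw [Finset.sum_congr rfl hCs,
        cross_sum_gen (fun v => v.isLeft = true) (Sum.inr b) (by simp) r hr1
          (fun t => ε ^ t) _ hs]
      simp only [hLcard, hLcard']
    have hdeg : (hdegree J (Sum.inr b) : ℂ)
        = (d₂ : ℂ) + ∑ t ∈ Finset.Icc 1 (r-1),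
            ((n₁.choose t * (n₂-1).choose (r-1-t) : ℕ) : ℂ) := by
      unfold hdegree
      rw [hJ, join_filter_right,
        Finset.card_union_of_disjoint (disj_right r n₁ n₂ E₂ b),
        Finset.card_image_of_injective _ (Finset.map_injective _), Nat.cast_add]
      congr 1
      · rw [← hreg₂ b]
        rfl
      · rw [Finset.card_eq_sum_ones, Nat.cast_sum]
        push_cast
        rw [cross_sum_gen (fun v => v.isLeft = true) (Sum.inr b) (by simp) r hr1
            (fun _ => (1:ℂ)) _ hs]
        simp [hRcard, hRcard', hLcard, hLcard']
    rw [hJ, join_filter_right, Finset.sum_union (disj_right r n₁ n₂ E₂ b), hA, hC, ← hJ, hdeg]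
    have hxb : x (Sum.inr b) = 1 := rfl
    rw [hxb, one_pow, heq]
    simp only [mul_add, mul_one, Finset.sum_add_distrib]
    ring
end

section
/- Let H1 be a d1-regular and H2 a d2-regular r-uniform hypergraph (r ≥ 2), and let H = H1 ⊗ H2 be their Kronecker product. If (λ, x) is an eigenpair of the Laplacian L(H1) and (μ, z) is an eigenpair of the Laplacian L(H2), then ((r−1)!·(λ d2 + μ d1 − λμ), x ⊗ z) is an eigenpair of L(H), where (x ⊗ z)_{(u,v)} = x_u z_v. -/
open Finset
open scoped Classical

/-- The Kronecker product of two `r`-uniform hypergraphs: a set `e` of pairs is a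
hyperedge iff `e = {(u i, v i) : i}` for injective enumerations `u`, `v` of a hyperedge
of `H₁` and of `H₂` respectively. -/
noncomputable def kronEdges (r : ℕ) {V₁ V₂ : Type*} [Fintype V₁] [DecidableEq V₁]
    [Fintype V₂] [DecidableEq V₂] (E₁ : Finset (Finset V₁)) (E₂ : Finset (Finset V₂)) :
    Finset (Finset (V₁ × V₂)) :=
  Finset.univ.filter (fun e =>
    ∃ (u : Fin r → V₁) (v : Fin r → V₂),
      Function.Injective u ∧ Function.Injective v ∧
      Finset.image u Finset.univ ∈ E₁ ∧ Finset.image v Finset.univ ∈ E₂ ∧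
      e = Finset.image (fun i => (u i, v i)) Finset.univ)

/- ### auxiliary development -/

def Pc {V : Type*} [Fintype V] [DecidableEq V] (n : ℕ) (E : Finset (Finset V)) (j : V)
    (f : Fin n → V) : Prop :=
  Function.Injective f ∧ (∀ i, f i ≠ j) ∧ insert j (Finset.image f Finset.univ) ∈ E

lemma adj_pc {V : Type*} [Fintype V] [DecidableEq V] (n : ℕ) (E : Finset (Finset V)) (j : V)
    (f : Fin n → V) :
    adjEntry (n + 1) E j f = if Pc n E j f then (1 / (n.factorial : ℂ)) else 0 := by
  simp [adjEntry, Pc]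

lemma card_filter_inj_image {V : Type*} [Fintype V] [DecidableEq V] (n : ℕ)
    (S : Finset V) (hS : S.card = n) :
    (Finset.univ.filter fun f : Fin n → V =>
      Function.Injective f ∧ Finset.image f Finset.univ = S).card = n.factorial := by
  rw [← Fintype.card_subtype]
  have e : {f : Fin n → V // Function.Injective f ∧ Finset.image f Finset.univ = S} ≃
      (Fin n ↪ {x // x ∈ S}) := by
    refine ⟨fun fp => ⟨fun i => ⟨fp.1 i, ?_⟩, fun a b h => fp.2.1 (congrArg Subtype.val h)⟩,
      fun g => ⟨fun i => (g i : V), ?_, ?_⟩, fun fp => Subtype.ext (funext fun i => rfl),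
      fun g => by ext i : 2; rfl⟩
    · have := Finset.mem_image_of_mem fp.1 (Finset.mem_univ i)
      rwa [fp.2.2] at this
    · intro a b h; exact g.injective (Subtype.ext h)
    · have hinj : Function.Injective (fun i => (g i : V)) :=
        fun a b h => g.injective (Subtype.ext h)
      apply Finset.eq_of_subset_of_card_le
      · intro w hw
        obtain ⟨i, -, rfl⟩ := Finset.mem_image.mp hw
        exact (g i).2
      · rw [hS, Finset.card_image_of_injective _ hinj, Finset.card_univ, Fintype.card_fin]
  rw [Fintype.card_congr e, Fintype.card_embedding_eq, Fintype.card_fin, Fintype.card_coe, hS,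
    Nat.descFactorial_self]

lemma card_pc {V : Type*} [Fintype V] [DecidableEq V] (n : ℕ) (E : Finset (Finset V))
    (hu : ∀ e ∈ E, e.card = n + 1) (j : V) :
    (Finset.univ.filter (Pc n E j)).card = n.factorial * hdegree E j := by
  rw [Finset.card_eq_sum_card_fiberwise
    (f := fun f : Fin n → V => insert j (Finset.image f Finset.univ))
    (t := E.filter fun e => j ∈ e) (by
      intro f hf
      rw [Finset.mem_coe, Finset.mem_filter] at hf ⊢
      exact ⟨hf.2.2.2, Finset.mem_insert_self _ _⟩)]
  have key : ∀ e ∈ E.filter (fun e => j ∈ e),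
      ((Finset.univ.filter (Pc n E j)).filter
        (fun f => insert j (Finset.image f Finset.univ) = e)).card = n.factorial := by
    intro e he
    rw [Finset.mem_filter] at he
    rw [Finset.filter_filter]
    have : ∀ f : Fin n → V,
        (Pc n E j f ∧ insert j (Finset.image f Finset.univ) = e) ↔
        (Function.Injective f ∧ Finset.image f Finset.univ = e.erase j) := by
      intro f
      constructor
      · rintro ⟨⟨hinj, hne, -⟩, hins⟩
        refine ⟨hinj, ?_⟩
        have hj : j ∉ Finset.image f Finset.univ := by
          simp only [Finset.mem_image, not_exists]
          intro i h; exact hne i h.2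
        rw [← hins, Finset.erase_insert hj]
      · rintro ⟨hinj, himg⟩
        have hne : ∀ i, f i ≠ j := by
          intro i hi
          have : f i ∈ e.erase j := himg ▸ Finset.mem_image_of_mem f (Finset.mem_univ i)
          rw [hi] at this
          exact (Finset.mem_erase.mp this).1 rfl
        have hins : insert j (Finset.image f Finset.univ) = e := by
          rw [himg, Finset.insert_erase he.2]
        exact ⟨⟨hinj, hne, hins ▸ he.1⟩, hins⟩
    rw [Finset.filter_congr (fun f _ => this f)]
    exact card_filter_inj_image n _ (by rw [Finset.card_erase_of_mem he.2, hu e he.1]; rfl)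
  rw [Finset.sum_congr rfl key, Finset.sum_const, hdegree, smul_eq_mul, mul_comm]

lemma dsum {V : Type*} [Fintype V] [DecidableEq V] (n : ℕ) (c : ℂ) (j : V) (y : V → ℂ) :
    ∑ f : Fin n → V, (if ∀ i, f i = j then c * ∏ i, y (f i) else 0) = c * y j ^ n := by
  rw [Finset.sum_eq_single (fun _ => j)]
  · simp [Finset.prod_const]
  · intro f _ hf
    rw [if_neg]
    intro h; exact hf (funext h)
  · simp

lemma kron_card {r : ℕ} {V₁ V₂ : Type*} [Fintype V₁] [DecidableEq V₁]
    [Fintype V₂] [DecidableEq V₂] {E₁ : Finset (Finset V₁)} {E₂ : Finset (Finset V₂)} :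
    ∀ e ∈ kronEdges r E₁ E₂, e.card = r := by
  intro e he
  rw [kronEdges, Finset.mem_filter] at he
  obtain ⟨-, u, v, hu, -, -, -, rfl⟩ := he
  rw [Finset.card_image_of_injective _ (fun a b h => hu (congrArg Prod.fst h)),
    Finset.card_univ, Fintype.card_fin]

lemma img_cons {m : ℕ} {V : Type*} [DecidableEq V] [Fintype V] (a : V) (g : Fin m → V) :
    Finset.image (Fin.cons a g : Fin (m+1) → V) Finset.univ
      = insert a (Finset.image g Finset.univ) := by
  ext w
  simp only [Finset.mem_image, Finset.mem_insert, Finset.mem_univ, true_and,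
    Fin.exists_fin_succ, Fin.cons_zero, Fin.cons_succ]
  tauto

lemma pc_kron {V₁ V₂ : Type*} [Fintype V₁] [DecidableEq V₁] [Fintype V₂] [DecidableEq V₂]
    (m : ℕ) (E₁ : Finset (Finset V₁)) (E₂ : Finset (Finset V₂)) (j₁ : V₁) (j₂ : V₂)
    (f : Fin m → V₁ × V₂) :
    Pc m (kronEdges (m+1) E₁ E₂) (j₁, j₂) f ↔
      Pc m E₁ j₁ (fun i => (f i).1) ∧ Pc m E₂ j₂ (fun i => (f i).2) := by
  constructor
  · rintro ⟨hinj, hne, hmem⟩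
    rw [kronEdges, Finset.mem_filter] at hmem
    obtain ⟨-, u, v, hu, hv, hu1, hv1, he⟩ := hmem
    have hfa : ∀ i : Fin m, f i ∈ insert (j₁, j₂) (Finset.image f Finset.univ) :=
      fun i => Finset.mem_insert_of_mem (Finset.mem_image_of_mem f (Finset.mem_univ i))
    have key1 : ∀ a ∈ insert (j₁, j₂) (Finset.image f Finset.univ),
        ∀ b ∈ insert (j₁, j₂) (Finset.image f Finset.univ), a.1 = b.1 → a = b := by
      intro a ha b hb h1
      rw [he, Finset.mem_image] at ha hb
      obtain ⟨i, -, rfl⟩ := ha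
      obtain ⟨i', -, rfl⟩ := hb
      simp only at h1
      rw [hu h1]
    have key2 : ∀ a ∈ insert (j₁, j₂) (Finset.image f Finset.univ),
        ∀ b ∈ insert (j₁, j₂) (Finset.image f Finset.univ), a.2 = b.2 → a = b := by
      intro a ha b hb h1
      rw [he, Finset.mem_image] at ha hb
      obtain ⟨i, -, rfl⟩ := ha
      obtain ⟨i', -, rfl⟩ := hb
      simp only at h1
      rw [hv h1]
    have himg1 : insert j₁ (Finset.image (fun i => (f i).1) Finset.univ)
        = Finset.image u Finset.univ := by
      have h1 : Finset.image Prod.fst (insert (j₁, j₂) (Finset.image f Finset.univ))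
          = insert j₁ (Finset.image (fun i => (f i).1) Finset.univ) := by
        rw [Finset.image_insert, Finset.image_image]; rfl
      rw [← h1, he, Finset.image_image]; rfl
    have himg2 : insert j₂ (Finset.image (fun i => (f i).2) Finset.univ)
        = Finset.image v Finset.univ := by
      have h1 : Finset.image Prod.snd (insert (j₁, j₂) (Finset.image f Finset.univ))
          = insert j₂ (Finset.image (fun i => (f i).2) Finset.univ) := by
        rw [Finset.image_insert, Finset.image_image]; rfl
      rw [← h1, he, Finset.image_image]; rfl
    refine ⟨⟨fun a b hab => hinj (key1 _ (hfa a) _ (hfa b) hab), fun i hi =>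
        hne i (key1 _ (hfa i) _ (Finset.mem_insert_self _ _) hi), himg1 ▸ hu1⟩,
      ⟨fun a b hab => hinj (key2 _ (hfa a) _ (hfa b) hab), fun i hi =>
        hne i (key2 _ (hfa i) _ (Finset.mem_insert_self _ _) hi), himg2 ▸ hv1⟩⟩
  · rintro ⟨⟨hinj1, hne1, hmem1⟩, ⟨hinj2, hne2, hmem2⟩⟩
    refine ⟨fun a b hab => hinj1 (congrArg Prod.fst hab),
      fun i h => hne1 i (congrArg Prod.fst h), ?_⟩
    rw [kronEdges, Finset.mem_filter]
    refine ⟨Finset.mem_univ _, Fin.cons j₁ (fun i => (f i).1), Fin.cons j₂ (fun i => (f i).2),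
      ?_, ?_, ?_, ?_, ?_⟩
    · rw [Fin.cons_injective_iff]
      exact ⟨fun ⟨i, hi⟩ => hne1 i hi, hinj1⟩
    · rw [Fin.cons_injective_iff]
      exact ⟨fun ⟨i, hi⟩ => hne2 i hi, hinj2⟩
    · rwa [img_cons]
    · rwa [img_cons]
    · ext w
      simp only [Finset.mem_insert, Finset.mem_image, Finset.mem_univ, true_and,
        Fin.exists_fin_succ, Fin.cons_zero, Fin.cons_succ]
      constructor
      · rintro (rfl | ⟨i, rfl⟩)
        · exact Or.inl rfl
        · exact Or.inr ⟨i, rfl⟩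
      · rintro (rfl | ⟨i, h⟩)
        · exact Or.inl rfl
        · exact Or.inr ⟨i, by rw [← h]⟩

lemma sum_pc_kron {V₁ V₂ : Type*} [Fintype V₁] [DecidableEq V₁] [Fintype V₂] [DecidableEq V₂]
    (m : ℕ) (E₁ : Finset (Finset V₁)) (E₂ : Finset (Finset V₂)) (j₁ : V₁) (j₂ : V₂)
    (g₁ : (Fin m → V₁) → ℂ) (g₂ : (Fin m → V₂) → ℂ) :
    ∑ f : Fin m → V₁ × V₂,
      (if Pc m (kronEdges (m+1) E₁ E₂) (j₁, j₂) f then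
        g₁ (fun i => (f i).1) * g₂ (fun i => (f i).2) else 0)
    = (∑ f₁ : Fin m → V₁, if Pc m E₁ j₁ f₁ then g₁ f₁ else 0) *
      (∑ f₂ : Fin m → V₂, if Pc m E₂ j₂ f₂ then g₂ f₂ else 0) := by
  rw [Finset.sum_mul_sum]
  rw [← Equiv.sum_comp (Equiv.arrowProdEquivProdArrow (Fin m) (fun _ => V₁) (fun _ => V₂)).symm
    (fun f : Fin m → V₁ × V₂ => if Pc m (kronEdges (m+1) E₁ E₂) (j₁, j₂) f then
        g₁ (fun i => (f i).1) * g₂ (fun i => (f i).2) else 0)]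
  rw [Fintype.sum_prod_type]
  refine Finset.sum_congr rfl fun f₁ _ => Finset.sum_congr rfl fun f₂ _ => ?_
  have h0 : (Equiv.arrowProdEquivProdArrow (Fin m) (fun _ => V₁) (fun _ => V₂)).symm (f₁, f₂)
      = fun i => (f₁ i, f₂ i) := rfl
  rw [h0]
  have h := pc_kron m E₁ E₂ j₁ j₂ (fun i => (f₁ i, f₂ i))
  by_cases h₁ : Pc m E₁ j₁ f₁ <;> by_cases h₂ : Pc m E₂ j₂ f₂ <;>
    simp_all [h₁, h₂]

lemma kron_adj_sum {V₁ V₂ : Type*} [Fintype V₁] [DecidableEq V₁] [Fintype V₂]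
    [DecidableEq V₂] (m : ℕ) (E₁ : Finset (Finset V₁)) (E₂ : Finset (Finset V₂))
    (j₁ : V₁) (j₂ : V₂) (x : V₁ → ℂ) (z : V₂ → ℂ) :
    (∑ f : Fin m → V₁ × V₂, if Pc m (kronEdges (m+1) E₁ E₂) (j₁, j₂) f then
        1 / (m.factorial : ℂ) * ∏ i, x (f i).1 * z (f i).2 else 0)
    = (m.factorial : ℂ)
      * (∑ f : Fin m → V₁, if Pc m E₁ j₁ f then 1 / (m.factorial : ℂ) * ∏ i, x (f i) else 0)
      * (∑ f : Fin m → V₂, if Pc m E₂ j₂ f then 1 / (m.factorial : ℂ) * ∏ i, z (f i) else 0) := by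
  have h1 : ∀ f : Fin m → V₁ × V₂, (if Pc m (kronEdges (m+1) E₁ E₂) (j₁, j₂) f then
        1 / (m.factorial : ℂ) * ∏ i, x (f i).1 * z (f i).2 else 0)
      = (if Pc m (kronEdges (m+1) E₁ E₂) (j₁, j₂) f then
        (fun f₁ : Fin m → V₁ => 1 / (m.factorial : ℂ) * ∏ i, x (f₁ i)) (fun i => (f i).1)
          * (fun f₂ : Fin m → V₂ => ∏ i, z (f₂ i)) (fun i => (f i).2) else 0) := by
    intro f
    by_cases h : Pc m (kronEdges (m+1) E₁ E₂) (j₁, j₂) f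
    · simp only [if_pos h, Finset.prod_mul_distrib]; ring
    · simp [h]
  have h3 := sum_pc_kron m E₁ E₂ j₁ j₂
    (fun f₁ : Fin m → V₁ => 1 / (m.factorial : ℂ) * ∏ i, x (f₁ i))
    (fun f₂ : Fin m → V₂ => ∏ i, z (f₂ i))
  rw [Finset.sum_congr rfl fun f _ => h1 f, h3]
  have h2 : (∑ f₂ : Fin m → V₂, if Pc m E₂ j₂ f₂ then ∏ i, z (f₂ i) else 0)
      = (m.factorial : ℂ) * ∑ f : Fin m → V₂,
          if Pc m E₂ j₂ f then 1 / (m.factorial : ℂ) * ∏ i, z (f i) else 0 := by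
    rw [Finset.mul_sum]
    refine Finset.sum_congr rfl fun f _ => ?_
    by_cases h : Pc m E₂ j₂ f
    · simp only [if_pos h]
      rw [← mul_assoc, mul_one_div, div_self (Nat.cast_ne_zero.mpr m.factorial_ne_zero), one_mul]
    · simp [h]
  rw [h2]; ring

lemma kron_deg {V₁ V₂ : Type*} [Fintype V₁] [DecidableEq V₁] [Fintype V₂]
    [DecidableEq V₂] (m : ℕ) (E₁ : Finset (Finset V₁)) (E₂ : Finset (Finset V₂))
    (hu₁ : ∀ e ∈ E₁, e.card = m + 1) (hu₂ : ∀ e ∈ E₂, e.card = m + 1)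
    (j₁ : V₁) (j₂ : V₂) :
    ((hdegree (kronEdges (m+1) E₁ E₂) (j₁, j₂) : ℂ))
      = (m.factorial : ℂ) * hdegree E₁ j₁ * hdegree E₂ j₂ := by
  have hne : (m.factorial : ℂ) ≠ 0 := Nat.cast_ne_zero.mpr m.factorial_ne_zero
  have h1 := card_pc m (kronEdges (m+1) E₁ E₂) kron_card (j₁, j₂)
  have h2 := card_pc m E₁ hu₁ j₁
  have h3 := card_pc m E₂ hu₂ j₂
  have h4 := sum_pc_kron m E₁ E₂ j₁ j₂ (fun _ => (1:ℂ)) (fun _ => 1)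
  simp only [mul_one, Finset.sum_boole] at h4
  rw [h1, h2, h3] at h4
  push_cast at h4 ⊢
  apply mul_left_cancel₀ hne
  linear_combination h4

/-- Laplacian eigenpairs of the Kronecker product of regular hypergraphs. -/
theorem stmt7 {V₁ V₂ : Type*} [Fintype V₁] [DecidableEq V₁] [Fintype V₂] [DecidableEq V₂]
    (r : ℕ) (hr : 2 ≤ r) (d₁ d₂ : ℕ)
    (E₁ : Finset (Finset V₁)) (E₂ : Finset (Finset V₂))
    (hu₁ : ∀ e ∈ E₁, e.card = r) (hu₂ : ∀ e ∈ E₂, e.card = r)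
    (hreg₁ : ∀ v, hdegree E₁ v = d₁) (hreg₂ : ∀ v, hdegree E₂ v = d₂)
    (lam mu : ℂ) (x : V₁ → ℂ) (z : V₂ → ℂ)
    (hx : IsEigenpair r (lapEntry r E₁) lam x)
    (hz : IsEigenpair r (lapEntry r E₂) mu z) :
    IsEigenpair r (lapEntry r (kronEdges r E₁ E₂))
      (((r - 1).factorial : ℂ) * (lam * d₂ + mu * d₁ - lam * mu))
      (fun p => x p.1 * z p.2) := by
  obtain ⟨m, rfl⟩ : ∃ m, r = m + 1 := ⟨r - 1, by omega⟩
  simp only [IsEigenpair, Nat.add_sub_cancel] at hx hz ⊢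
  constructor
  · intro h0
    obtain ⟨j₁, hx1⟩ := Function.ne_iff.mp hx.1
    obtain ⟨j₂, hz1⟩ := Function.ne_iff.mp hz.1
    have := congrFun h0 (j₁, j₂)
    simp only [Pi.zero_apply, mul_eq_zero] at this hx1 hz1
    tauto
  · rintro ⟨j₁, j₂⟩
    have hxe := hx.2 j₁
    have hze := hz.2 j₂
    simp only [lapEntry, sub_mul, Finset.sum_sub_distrib, adj_pc, ite_mul, zero_mul,
      hreg₁, hreg₂] at hxe hze ⊢
    have hD1 : (∑ f : Fin (m + 1 - 1) → V₁,
        if ∀ i, f i = j₁ then (d₁ : ℂ) * ∏ i, x (f i) else 0) = (d₁ : ℂ) * x j₁ ^ m :=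
      dsum (m + 1 - 1) _ j₁ x
    have hD2 : (∑ f : Fin (m + 1 - 1) → V₂,
        if ∀ i, f i = j₂ then (d₂ : ℂ) * ∏ i, z (f i) else 0) = (d₂ : ℂ) * z j₂ ^ m :=
      dsum (m + 1 - 1) _ j₂ z
    rw [hD1] at hxe
    rw [hD2] at hze
    have hA1 : (∑ f : Fin (m + 1 - 1) → V₁,
        if Pc m E₁ j₁ f then 1 / (m.factorial : ℂ) * ∏ i, x (f i) else 0)
        = ((d₁ : ℂ) - lam) * x j₁ ^ m := by linear_combination -hxe
    have hA2 : (∑ f : Fin (m + 1 - 1) → V₂,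
        if Pc m E₂ j₂ f then 1 / (m.factorial : ℂ) * ∏ i, z (f i) else 0)
        = ((d₂ : ℂ) - mu) * z j₂ ^ m := by linear_combination -hze
    have hD : (∑ f : Fin (m + 1 - 1) → V₁ × V₂,
        if ∀ i, f i = (j₁, j₂) then
          ((hdegree (kronEdges (m + 1) E₁ E₂) (j₁, j₂) : ℂ)) * ∏ i, x (f i).1 * z (f i).2
        else 0)
        = ((hdegree (kronEdges (m + 1) E₁ E₂) (j₁, j₂) : ℂ)) * (x j₁ * z j₂) ^ m :=
      dsum (m + 1 - 1) _ (j₁, j₂) (fun p => x p.1 * z p.2)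
    have hS : (∑ f : Fin (m + 1 - 1) → V₁ × V₂,
        if Pc m (kronEdges (m + 1) E₁ E₂) (j₁, j₂) f then
          1 / (m.factorial : ℂ) * ∏ i, x (f i).1 * z (f i).2 else 0)
        = (m.factorial : ℂ)
          * (∑ f : Fin (m + 1 - 1) → V₁,
              if Pc m E₁ j₁ f then 1 / (m.factorial : ℂ) * ∏ i, x (f i) else 0)
          * (∑ f : Fin (m + 1 - 1) → V₂,
              if Pc m E₂ j₂ f then 1 / (m.factorial : ℂ) * ∏ i, z (f i) else 0) :=
      kron_adj_sum m E₁ E₂ j₁ j₂ x z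
    have hdK : ((hdegree (kronEdges (m + 1) E₁ E₂) (j₁, j₂) : ℂ))
        = (m.factorial : ℂ) * d₁ * d₂ := by
      rw [kron_deg m E₁ E₂ hu₁ hu₂ j₁ j₂, hreg₁, hreg₂]
    rw [hD, hS, hA1, hA2, hdK, mul_pow]
    ring
end
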